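/- arXiv:2111.13322 — 4 statements merged into one kernel-verified Lean document; each statement's English description precedes it below -/
import Mathlib

section
/- (Theorem 1: one-epoch contraction of Shuffled-SARAH.) Assume each f_i is convex, P is μ-strongly convex with minimizer w* and optimal value P*, the δ-similarity condition holds, and the step size satisfies 0 < η ≤ min(1/(8nL), 1/(8n²δ)). Fix permutations π and π' of {1,…,n}, a point w_prev ∈ ℝ^d and a vector v_prev ∈ ℝ^d. Run one SARAH epoch with step size η, permutation π, start point w_prev and initial direction v_prev, producing inner iterates w¹_prev,…,wⁿ_prev and epoch output w_cur; set v_cur = (1/n)·Σ_{i=1}^{n} ∇f_{π(i)}(wⁱ_prev). Run a second SARAH epoch with step size η, permutation π', start point w_cur and initial direction v_cur, producing epoch output w_next. Then P(w_next) − P* + (η(n+1)/16)·‖v_cur‖² ≤ (1 − η·μ·(n+1)/2)·(P(w_cur) − P* + (η(n+1)/16)·‖v_prev‖²). -/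
/-!
Within a SARAH epoch each update changes the direction by at most `ηL` times its size, and
`ηL ≤ 1/(8n)`, so every direction of the epoch stays within `‖v₀‖/7` of the initial one `v₀`.
Hence an epoch moves its start point by `-η(n+1) v₀` up to an error `η(n+1)‖v₀‖/7`, and the
average `v_cur` of the gradients met in the first epoch is within `‖v_prev‖/7` of `∇P(w_cur)`.
The second epoch is thus an inexact gradient step of length `h = η(n+1)` from `w_cur`. The
descent lemma for the `L`-smooth `P`, the polarization `2⟪∇P, v⟫ = ‖∇P‖² + ‖v‖² - ‖v - ∇P‖²`
and the Polyak–Łojasiewicz inequality `2μ(P - P*) ≤ ‖∇P‖²` give the contraction of the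
potential `P - P* + (h/16)‖v‖²`; `μ ≤ L` keeps the factor `1 - hμ/2` above `7/8`.
-/

open scoped RealInnerProductSpace
open Finset

variable {E : Type*} [NormedAddCommGroup E] [NormedSpace ℝ E]

theorem ConvexOn.add_fderiv_sub_le {f : E → ℝ} (hf : ConvexOn ℝ Set.univ f) {x : E}
    (hx : DifferentiableAt ℝ f x) (y : E) : f x + fderiv ℝ f x (y - x) ≤ f y := by
  have hline : HasDerivAt (f ∘ AffineMap.lineMap (k := ℝ) x y) (fderiv ℝ f x (y - x)) 0 := by
    have h := AffineMap.hasDerivAt_lineMap (a := x) (b := y) (x := (0 : ℝ))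
    rw [← AffineMap.lineMap_apply_zero x y (k := ℝ)] at hx
    simpa using hx.hasFDerivAt.comp_hasDerivAt (0 : ℝ) h
  have := (hf.comp_affineMap (AffineMap.lineMap x y)).le_slope_of_hasDerivAt
    (Set.mem_univ 0) (Set.mem_univ 1) one_pos hline
  simpa [slope, map_sub, add_comm, le_sub_iff_add_le] using this

theorem norm_average_le {n : ℕ} (hn : n ≠ 0)
    {u : Fin n → E} {C : ℝ} (hu : ∀ i, ‖u i‖ ≤ C) : ‖(1 / (n : ℝ)) • ∑ i, u i‖ ≤ C := by
  have hn' : (0 : ℝ) < n := by positivity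
  calc ‖(1 / (n : ℝ)) • ∑ i, u i‖ ≤ 1 / n * (n * C) := by
        rw [norm_smul, Real.norm_of_nonneg (by positivity)]
        gcongr
        simpa using norm_sum_le_of_le univ (fun i _ => hu i)
    _ = C := by field_simp

section Epoch

variable {n : ℕ}

def IsSarahEpoch (η : ℝ) (G : Fin n → E → E) (W V : ℕ → E) : Prop :=
  ∀ i : Fin n, W (i + 1) = W i - η • V i ∧ V (i + 1) = V i + G i (W (i + 1)) - G i (W i)

variable {η L : ℝ} {G : Fin n → E → E} {W V : ℕ → E}

namespace IsSarahEpoch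

theorem iterate_eq (hS : IsSarahEpoch η G W V) {k : ℕ} (hk : k ≤ n) :
    W k = W 0 - η • ∑ j ∈ range k, V j := by
  induction k with
  | zero => simp
  | succ k ih =>
    rw [(hS ⟨k, hk⟩).1, ih (by omega), sum_range_succ, smul_add, sub_sub]

theorem output_eq (hS : IsSarahEpoch η G W V) :
    W n - η • V n = W 0 - η • ∑ j ∈ range (n + 1), V j := by
  rw [hS.iterate_eq le_rfl, sum_range_succ, smul_add, sub_sub]

theorem norm_direction_sub_le_mul (hS : IsSarahEpoch η G W V) (hη : 0 ≤ η)
    (hηL : η * L ≤ 1 / (8 * n)) (hG : ∀ i a b, ‖G i a - G i b‖ ≤ L * ‖a - b‖)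
    {k : ℕ} (hk : k ≤ n) : ‖V k - V 0‖ ≤ k / (7 * n) * ‖V 0‖ := by
  induction k with
  | zero => simp
  | succ k ih =>
    have hn : (0 : ℝ) < n := by exact_mod_cast (show 0 < n by omega)
    have hkn : (k : ℝ) + 1 ≤ n := by exact_mod_cast hk
    obtain ⟨hW, hV⟩ := hS ⟨k, hk⟩
    have ih := ih (by omega)
    have hdir : ‖V k‖ ≤ 8 / 7 * ‖V 0‖ := by
      have : (k : ℝ) / (7 * n) ≤ 1 / 7 := by
        rw [div_le_div_iff₀ (by positivity) (by norm_num)]; linarith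
      calc ‖V k‖ ≤ ‖V 0‖ + ‖V k - V 0‖ := norm_le_insert' _ _
        _ ≤ ‖V 0‖ + 1 / 7 * ‖V 0‖ := by gcongr; exact ih.trans (by gcongr)
        _ = 8 / 7 * ‖V 0‖ := by ring
    have hstep : ‖V (k + 1) - V k‖ ≤ η * L * ‖V k‖ := by
      calc ‖V (k + 1) - V k‖ = ‖G ⟨k, hk⟩ (W (k + 1)) - G ⟨k, hk⟩ (W k)‖ := by
            rw [hV]; congr 1; abel
        _ ≤ L * ‖W (k + 1) - W k‖ := hG _ _ _
        _ = η * L * ‖V k‖ := by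
            rw [hW, sub_sub_cancel_left, norm_neg, norm_smul, Real.norm_of_nonneg hη]; ring
    calc ‖V (k + 1) - V 0‖ ≤ ‖V (k + 1) - V k‖ + ‖V k - V 0‖ :=
          norm_sub_le_norm_sub_add_norm_sub _ _ _
      _ ≤ 1 / (8 * n) * (8 / 7 * ‖V 0‖) + k / (7 * n) * ‖V 0‖ := by
          gcongr
          exact hstep.trans (by gcongr)
      _ = ((k + 1 : ℕ) : ℝ) / (7 * n) * ‖V 0‖ := by push_cast; field_simp; ring

theorem norm_direction_sub_le (hS : IsSarahEpoch η G W V) (hη : 0 ≤ η)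
    (hηL : η * L ≤ 1 / (8 * n)) (hG : ∀ i a b, ‖G i a - G i b‖ ≤ L * ‖a - b‖)
    {k : ℕ} (hk : k ≤ n) : ‖V k - V 0‖ ≤ ‖V 0‖ / 7 := by
  refine (hS.norm_direction_sub_le_mul hη hηL hG hk).trans ?_
  rcases Nat.eq_zero_or_pos n with rfl | hn
  · simp only [CharP.cast_eq_zero, mul_zero, div_zero, zero_mul]; positivity
  have : (k : ℝ) ≤ n := by exact_mod_cast hk
  rw [div_mul_eq_mul_div, div_le_div_iff₀ (by positivity) (by norm_num)]
  nlinarith [norm_nonneg (V 0)]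

theorem norm_direction_le (hS : IsSarahEpoch η G W V) (hη : 0 ≤ η)
    (hηL : η * L ≤ 1 / (8 * n)) (hG : ∀ i a b, ‖G i a - G i b‖ ≤ L * ‖a - b‖)
    {k : ℕ} (hk : k ≤ n) : ‖V k‖ ≤ 8 / 7 * ‖V 0‖ := by
  have := hS.norm_direction_sub_le hη hηL hG hk
  linarith [norm_le_insert' (V k) (V 0)]

theorem norm_iterate_sub_output_le (hS : IsSarahEpoch η G W V) (hη : 0 ≤ η)
    (hηL : η * L ≤ 1 / (8 * n)) (hG : ∀ i a b, ‖G i a - G i b‖ ≤ L * ‖a - b‖) (i : Fin n) :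
    ‖W (i + 1) - (W n - η • V n)‖ ≤ η * (n * (8 / 7 * ‖V 0‖)) := by
  have hsplit : W (i + 1) - (W n - η • V n) = η • ∑ j ∈ Ico (i + 1 : ℕ) (n + 1), V j := by
    rw [hS.iterate_eq i.isLt, hS.output_eq, sum_Ico_eq_sub _ (by omega), smul_sub]
    abel
  rw [hsplit, norm_smul, Real.norm_of_nonneg hη]
  gcongr
  calc ‖∑ j ∈ Ico (i + 1 : ℕ) (n + 1), V j‖ ≤ #(Ico (i + 1 : ℕ) (n + 1)) • (8 / 7 * ‖V 0‖) :=
        (norm_sum_le_of_le _ fun j hj => hS.norm_direction_le hη hηL hG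
          (by simp only [mem_Ico] at hj; omega)).trans_eq (sum_const _)
    _ ≤ n * (8 / 7 * ‖V 0‖) := by
        rw [nsmul_eq_mul, Nat.card_Ico]
        gcongr
        exact_mod_cast (by omega : n + 1 - (i + 1) ≤ n)

theorem norm_average_sub_average_output_le (hS : IsSarahEpoch η G W V) (hη : 0 ≤ η)
    (hL : 0 ≤ L) (hηL : η * L ≤ 1 / (8 * n)) (hG : ∀ i a b, ‖G i a - G i b‖ ≤ L * ‖a - b‖)
    (hn : n ≠ 0) :
    ‖(1 / (n : ℝ)) • ∑ i : Fin n, G i (W (i + 1))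
      - (1 / (n : ℝ)) • ∑ i : Fin n, G i (W n - η • V n)‖ ≤ ‖V 0‖ / 7 := by
  rw [← smul_sub, ← sum_sub_distrib]
  refine norm_average_le hn fun i => ?_
  have hn' : (0 : ℝ) < n := by positivity
  calc ‖G i (W (i + 1)) - G i (W n - η • V n)‖ ≤ L * (η * (n * (8 / 7 * ‖V 0‖))) :=
        (hG _ _ _).trans (by gcongr; exact hS.norm_iterate_sub_output_le hη hηL hG i)
    _ = η * L * n * (8 / 7 * ‖V 0‖) := by ring
    _ ≤ 1 / (8 * n) * n * (8 / 7 * ‖V 0‖) := by gcongr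
    _ = ‖V 0‖ / 7 := by field_simp

theorem norm_output_sub_add_le (hS : IsSarahEpoch η G W V) (hη : 0 ≤ η)
    (hηL : η * L ≤ 1 / (8 * n)) (hG : ∀ i a b, ‖G i a - G i b‖ ≤ L * ‖a - b‖) :
    ‖W n - η • V n - W 0 + (η * (n + 1)) • V 0‖ ≤ η * (n + 1) / 7 * ‖V 0‖ := by
  have hsplit : W n - η • V n - W 0 + (η * (n + 1)) • V 0
      = η • ∑ j ∈ range (n + 1), (V 0 - V j) := by
    rw [hS.output_eq, sum_sub_distrib, sum_const, card_range, smul_sub, mul_smul,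
      ← Nat.cast_smul_eq_nsmul ℝ]
    push_cast
    abel
  rw [hsplit, norm_smul, Real.norm_of_nonneg hη]
  calc η * ‖∑ j ∈ range (n + 1), (V 0 - V j)‖ ≤ η * (#(range (n + 1)) • (‖V 0‖ / 7)) := by
        gcongr
        refine (norm_sum_le_of_le _ fun j hj => ?_).trans_eq (sum_const _)
        rw [norm_sub_rev]
        exact hS.norm_direction_sub_le hη hηL hG (Nat.lt_succ_iff.1 (mem_range.1 hj))
    _ = η * (n + 1) / 7 * ‖V 0‖ := by rw [card_range, nsmul_eq_mul]; push_cast; ring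

end IsSarahEpoch

end Epoch

section Smooth

variable {F : Type*} [NormedAddCommGroup F] [InnerProductSpace ℝ F] [CompleteSpace F]
  {f : F → ℝ} {μ L : ℝ}

theorem hasGradientAt_const_mul_sum {ι : Type*} [Fintype ι] {g : ι → F → ℝ} (c : ℝ) {x : F}
    (hg : ∀ i, DifferentiableAt ℝ (g i) x) :
    HasGradientAt (fun w => c * ∑ i, g i w) (c • ∑ i, gradient (g i) x) x := by
  rw [hasGradientAt_iff_hasFDerivAt, map_smul, map_sum]
  simp only [toDual_gradient]
  exact (HasFDerivAt.fun_sum fun i _ => (hg i).hasFDerivAt).const_mul c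

theorem StrongConvexOn.add_inner_gradient_add_le (hf : StrongConvexOn Set.univ μ f)
    (hd : Differentiable ℝ f) (x y : F) :
    f x + ⟪gradient f x, y - x⟫ + μ / 2 * ‖y - x‖ ^ 2 ≤ f y := by
  have hψ : HasFDerivAt (fun z => f z - μ / 2 * ‖z‖ ^ 2)
      (fderiv ℝ f x - (μ / 2) • (2 • (innerSL ℝ x))) x :=
    (hd x).hasFDerivAt.sub ((hasFDerivAt_id x).norm_sq.const_mul (μ / 2))
  have := (strongConvexOn_iff_convex.1 hf).add_fderiv_sub_le hψ.differentiableAt y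
  rw [hψ.fderiv] at this
  simp only [FunLike.coe_sub, FunLike.coe_smul, Pi.sub_apply, Pi.smul_apply, innerSL_apply_apply,
    ← inner_gradient_left] at this
  rw [norm_sub_sq_real]
  simp only [inner_sub_right, real_inner_self_eq_norm_sq, smul_eq_mul, nsmul_eq_mul,
    Nat.cast_ofNat] at this ⊢
  rw [real_inner_comm x y]
  linarith

theorem StrongConvexOn.mul_sub_le_norm_gradient_sq (hf : StrongConvexOn Set.univ μ f)
    (hd : Differentiable ℝ f) (hμ : 0 ≤ μ) (x y : F) :
    2 * μ * (f x - f y) ≤ ‖gradient f x‖ ^ 2 := by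
  have hfo := hf.add_inner_gradient_add_le hd x y
  have hcs := neg_le_of_abs_le (abs_real_inner_le_norm (gradient f x) (y - x))
  nlinarith [sq_nonneg (‖gradient f x‖ - μ * ‖y - x‖), norm_nonneg (y - x)]

theorem StrongConvexOn.le_of_lipschitz_gradient [Nontrivial F]
    (hf : StrongConvexOn Set.univ μ f)
    (hd : Differentiable ℝ f) (hL : ∀ x y, ‖gradient f x - gradient f y‖ ≤ L * ‖x - y‖) :
    μ ≤ L := by
  obtain ⟨x, hx⟩ := exists_ne (0 : F)
  have h₁ := hf.add_inner_gradient_add_le hd x 0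
  have h₂ := hf.add_inner_gradient_add_le hd 0 x
  have hmono : μ * ‖x‖ ^ 2 ≤ ⟪gradient f x - gradient f 0, x⟫ := by
    simp only [zero_sub, sub_zero, norm_neg, inner_neg_right, inner_sub_left] at h₁ h₂ ⊢
    linarith
  have hcs : ⟪gradient f x - gradient f 0, x⟫ ≤ L * ‖x‖ ^ 2 := by
    calc _ ≤ ‖gradient f x - gradient f 0‖ * ‖x‖ := real_inner_le_norm _ _
      _ ≤ L * ‖x - 0‖ * ‖x‖ := by gcongr; exact hL x 0
      _ = L * ‖x‖ ^ 2 := by rw [sub_zero]; ring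
  exact le_of_mul_le_mul_right (hmono.trans hcs) (by positivity)

theorem le_add_inner_gradient_add_mul_norm_sq (hd : Differentiable ℝ f) (hL₀ : 0 ≤ L)
    (hL : ∀ x y, ‖gradient f x - gradient f y‖ ≤ L * ‖x - y‖) (x y : F) :
    f y ≤ f x + ⟪gradient f x, y - x⟫ + L * ‖y - x‖ ^ 2 := by
  have hbound : ∀ z ∈ segment ℝ x y, ‖fderiv ℝ f z - fderiv ℝ f x‖ ≤ L * ‖y - x‖ := by
    intro z hz
    have hzx : ‖z - x‖ ≤ ‖y - x‖ := by
      have := dist_add_dist_of_mem_segment hz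
      rw [dist_eq_norm, dist_eq_norm, dist_eq_norm, norm_sub_rev x z, norm_sub_rev x y] at this
      linarith [norm_nonneg (z - y)]
    rw [← toDual_gradient, ← toDual_gradient, ← map_sub, LinearIsometryEquiv.norm_map]
    exact (hL z x).trans (by gcongr)
  have := Convex.norm_image_sub_le_of_norm_hasFDerivWithin_le'
    (fun z _ => (hd z).hasFDerivAt.hasFDerivWithinAt) hbound (convex_segment x y)
    (left_mem_segment ℝ x y) (right_mem_segment ℝ x y)
  rw [← inner_gradient_left, Real.norm_eq_abs] at this
  nlinarith [(abs_le.1 this).2]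

theorem StrongConvexOn.inexact_gradient_step_contraction (hf : StrongConvexOn Set.univ μ f)
    (hd : Differentiable ℝ f) (hμ : 0 ≤ μ)
    (hL : ∀ x y, ‖gradient f x - gradient f y‖ ≤ L * ‖x - y‖) (hμL : μ ≤ L)
    {h c : ℝ} (hh : 0 ≤ h) (hLh : L * h ≤ 1 / 4) {x y v : F}
    (hstep : ‖y - x + h • v‖ ≤ h / 7 * ‖v‖) (herr : ‖v - gradient f x‖ ≤ c / 7) (z : F) :
    f y - f z + h / 16 * ‖v‖ ^ 2 ≤ (1 - h * μ / 2) * (f x - f z + h / 16 * c ^ 2) := by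
  have hL₀ : 0 ≤ L := hμ.trans hμL
  set q := gradient f x
  set r := y - x + h • v
  have hdesc := le_add_inner_gradient_add_mul_norm_sq hd hL₀ hL x y
  have hinner : ⟪q, y - x⟫ = ⟪q, r⟫ - h * ⟪q, v⟫ := by
    rw [show y - x = r - h • v by simp [r], inner_sub_right, real_inner_smul_right]
  have hPL : h * (2 * μ * (f x - f z)) ≤ h * ‖q‖ ^ 2 :=
    mul_le_mul_of_nonneg_left (hf.mul_sub_le_norm_gradient_sq hd hμ x z) hh
  have hpol : h * (2 * ⟪q, v⟫) = h * (‖q‖ ^ 2 + ‖v‖ ^ 2 - ‖v - q‖ ^ 2) := by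
    rw [norm_sub_sq_real, real_inner_comm]; ring
  have hqr : ⟪q, r⟫ ≤ h / 14 * (‖q‖ ^ 2 + ‖v‖ ^ 2) := by
    calc ⟪q, r⟫ ≤ ‖q‖ * (h / 7 * ‖v‖) :=
          (real_inner_le_norm q r).trans (by gcongr)
      _ ≤ h / 14 * (‖q‖ ^ 2 + ‖v‖ ^ 2) := by
          nlinarith [mul_nonneg hh (sq_nonneg (‖q‖ - ‖v‖))]
  have hmove : L * ‖y - x‖ ^ 2 ≤ 16 / 49 * h * ‖v‖ ^ 2 := by
    have : ‖y - x‖ ≤ 8 / 7 * h * ‖v‖ := by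
      calc ‖y - x‖ = ‖r - h • v‖ := by simp [r]
        _ ≤ ‖r‖ + ‖h • v‖ := norm_sub_le _ _
        _ ≤ h / 7 * ‖v‖ + h * ‖v‖ := by rw [norm_smul, Real.norm_of_nonneg hh]; gcongr
        _ = 8 / 7 * h * ‖v‖ := by ring
    calc L * ‖y - x‖ ^ 2 ≤ L * (8 / 7 * h * ‖v‖) ^ 2 := by gcongr
      _ = 64 / 49 * (L * h) * (h * ‖v‖ ^ 2) := by ring
      _ ≤ 64 / 49 * (1 / 4) * (h * ‖v‖ ^ 2) := by gcongr
      _ = 16 / 49 * h * ‖v‖ ^ 2 := by ring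
  have herr2 : h * ‖v - q‖ ^ 2 ≤ h * (c ^ 2 / 49) := by
    gcongr
    calc ‖v - q‖ ^ 2 ≤ (c / 7) ^ 2 := by gcongr
      _ = c ^ 2 / 49 := by ring
  have hμh : h * μ * (h * c ^ 2) ≤ 1 / 4 * (h * c ^ 2) := by
    gcongr
    nlinarith
  linarith [mul_nonneg hh (sq_nonneg c), mul_nonneg hh (sq_nonneg ‖v‖),
    mul_nonneg hh (sq_nonneg ‖q‖)]

end Smooth

theorem shuffled_sarah_one_epoch_contraction_general
    {d n : ℕ} (hd : 1 ≤ d) (hn : 1 ≤ n)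
    (f : Fin n → EuclideanSpace ℝ (Fin d) → ℝ)
    (P : EuclideanSpace ℝ (Fin d) → ℝ)
    (hP : ∀ w, P w = (1 / (n : ℝ)) * ∑ i, f i w)
    (L μ δ η : ℝ) (hL : 0 < L) (hμ : 0 < μ)
    (hdiff : ∀ i, Differentiable ℝ (f i))
    (hLip : ∀ i w₁ w₂, ‖gradient (f i) w₁ - gradient (f i) w₂‖ ≤ L * ‖w₁ - w₂‖)
    (hsc : StrongConvexOn Set.univ μ P)
    (wstar : EuclideanSpace ℝ (Fin d))
    (Pstar : ℝ) (hPstar : Pstar = P wstar)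
    (hη0 : 0 < η)
    (hη : η ≤ min (1 / (8 * n * L)) (1 / (8 * n ^ 2 * δ)))
    (π π' : Equiv.Perm (Fin n))
    (vprev : EuclideanSpace ℝ (Fin d))
    -- first epoch: start point `wprev`, initial direction `vprev`, permutation `π`
    (W V : ℕ → EuclideanSpace ℝ (Fin d))
    (hV0 : V 0 = vprev)
    (hWrec : ∀ i : Fin n, W ((i : ℕ) + 1) = W i - η • V i)
    (hVrec : ∀ i : Fin n, V ((i : ℕ) + 1)
      = V i + gradient (f (π i)) (W ((i : ℕ) + 1)) - gradient (f (π i)) (W i))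
    (wcur : EuclideanSpace ℝ (Fin d)) (hwcur : wcur = W n - η • V n)
    (vcur : EuclideanSpace ℝ (Fin d))
    (hvcur : vcur = (1 / (n : ℝ)) • ∑ i : Fin n, gradient (f (π i)) (W ((i : ℕ) + 1)))
    -- second epoch: start point `wcur`, initial direction `vcur`, permutation `π'`
    (W' V' : ℕ → EuclideanSpace ℝ (Fin d))
    (hW'0 : W' 0 = wcur) (hV'0 : V' 0 = vcur)
    (hW'rec : ∀ i : Fin n, W' ((i : ℕ) + 1) = W' i - η • V' i)
    (hV'rec : ∀ i : Fin n, V' ((i : ℕ) + 1)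
      = V' i + gradient (f (π' i)) (W' ((i : ℕ) + 1)) - gradient (f (π' i)) (W' i))
    (wnext : EuclideanSpace ℝ (Fin d)) (hwnext : wnext = W' n - η • V' n) :
    P wnext - Pstar + (η * ((n : ℝ) + 1) / 16) * ‖vcur‖ ^ 2
      ≤ (1 - η * μ * ((n : ℝ) + 1) / 2)
        * (P wcur - Pstar + (η * ((n : ℝ) + 1) / 16) * ‖vprev‖ ^ 2) := by
  have hn₀ : n ≠ 0 := by omega
  have hηL : η * L ≤ 1 / (8 * n) := by
    rw [← le_div_iff₀ hL, div_div]
    exact hη.trans (min_le_left _ _)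
  have hLh : L * (η * (n + 1)) ≤ 1 / 4 := by
    have hn' : (1 : ℝ) ≤ n := by exact_mod_cast hn
    calc L * (η * (n + 1)) = η * L * (n + 1) := by ring
      _ ≤ 1 / (8 * n) * (n + 1) := by gcongr
      _ ≤ 1 / 4 := by rw [div_mul_eq_mul_div, one_mul, div_le_iff₀ (by positivity)]; linarith
  have hgradP : ∀ x, HasGradientAt P ((1 / (n : ℝ)) • ∑ i, gradient (f i) x) x := fun x => by
    rw [funext hP]; exact hasGradientAt_const_mul_sum _ fun i => (hdiff i).differentiableAt
  have hPd : Differentiable ℝ P := fun x => (hgradP x).differentiableAt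
  have hPLip : ∀ a b, ‖gradient P a - gradient P b‖ ≤ L * ‖a - b‖ := fun a b => by
    rw [(hgradP a).gradient, (hgradP b).gradient, ← smul_sub, ← sum_sub_distrib]
    exact norm_average_le hn₀ fun i => hLip i a b
  have : Nonempty (Fin d) := ⟨⟨0, hd⟩⟩
  have hμL := hsc.le_of_lipschitz_gradient hPd hPLip
  have hS : IsSarahEpoch η (fun i => gradient (f (π i))) W V := fun i => ⟨hWrec i, hVrec i⟩
  have hS' : IsSarahEpoch η (fun i => gradient (f (π' i))) W' V' := fun i => ⟨hW'rec i, hV'rec i⟩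
  have herr : ‖vcur - gradient P wcur‖ ≤ ‖vprev‖ / 7 := by
    have := hS.norm_average_sub_average_output_le hη0.le hL.le hηL (fun i => hLip (π i)) hn₀
    rwa [← hvcur, ← hwcur, Equiv.sum_comp π (fun i => gradient (f i) wcur),
      ← (hgradP wcur).gradient, hV0] at this
  have hstep : ‖wnext - wcur + (η * (n + 1)) • vcur‖ ≤ η * (n + 1) / 7 * ‖vcur‖ := by
    have := hS'.norm_output_sub_add_le hη0.le hηL (fun i => hLip (π' i))
    rwa [← hwnext, hW'0, hV'0] at this
  have := hsc.inexact_gradient_step_contraction hPd hμ.le hPLip hμL (by positivity) hLh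
    hstep herr wstar
  rw [hPstar]
  convert this using 2
  ring

/-- Theorem 1: one-epoch contraction of Shuffled-SARAH. -/
theorem shuffled_sarah_one_epoch_contraction
    {d n : ℕ} (hd : 1 ≤ d) (hn : 1 ≤ n)
    (f : Fin n → EuclideanSpace ℝ (Fin d) → ℝ)
    (P : EuclideanSpace ℝ (Fin d) → ℝ)
    (hP : ∀ w, P w = (1 / (n : ℝ)) * ∑ i, f i w)
    (L μ δ η : ℝ) (hL : 0 < L) (hμ : 0 < μ) (hδ : 0 < δ)
    (hdiff : ∀ i, Differentiable ℝ (f i))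
    (hconv : ∀ i, ConvexOn ℝ Set.univ (f i))
    (hLip : ∀ i w₁ w₂, ‖gradient (f i) w₁ - gradient (f i) w₂‖ ≤ L * ‖w₁ - w₂‖)
    (hsc : StrongConvexOn Set.univ μ P)
    (wstar : EuclideanSpace ℝ (Fin d)) (hmin : IsMinOn P Set.univ wstar)
    (Pstar : ℝ) (hPstar : Pstar = P wstar)
    (hsim : ∀ i w₁ w₂,
      ‖(gradient (f i) w₁ - gradient P w₁) - (gradient (f i) w₂ - gradient P w₂)‖
        ≤ (δ / 2) * ‖w₁ - w₂‖)
    (hη0 : 0 < η)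
    (hη : η ≤ min (1 / (8 * n * L)) (1 / (8 * n ^ 2 * δ)))
    (π π' : Equiv.Perm (Fin n))
    (wprev vprev : EuclideanSpace ℝ (Fin d))
    -- first epoch: start point `wprev`, initial direction `vprev`, permutation `π`
    (W V : ℕ → EuclideanSpace ℝ (Fin d))
    (hW0 : W 0 = wprev) (hV0 : V 0 = vprev)
    (hWrec : ∀ i : Fin n, W ((i : ℕ) + 1) = W i - η • V i)
    (hVrec : ∀ i : Fin n, V ((i : ℕ) + 1)
      = V i + gradient (f (π i)) (W ((i : ℕ) + 1)) - gradient (f (π i)) (W i))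
    (wcur : EuclideanSpace ℝ (Fin d)) (hwcur : wcur = W n - η • V n)
    (vcur : EuclideanSpace ℝ (Fin d))
    (hvcur : vcur = (1 / (n : ℝ)) • ∑ i : Fin n, gradient (f (π i)) (W ((i : ℕ) + 1)))
    -- second epoch: start point `wcur`, initial direction `vcur`, permutation `π'`
    (W' V' : ℕ → EuclideanSpace ℝ (Fin d))
    (hW'0 : W' 0 = wcur) (hV'0 : V' 0 = vcur)
    (hW'rec : ∀ i : Fin n, W' ((i : ℕ) + 1) = W' i - η • V' i)
    (hV'rec : ∀ i : Fin n, V' ((i : ℕ) + 1)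
      = V' i + gradient (f (π' i)) (W' ((i : ℕ) + 1)) - gradient (f (π' i)) (W' i))
    (wnext : EuclideanSpace ℝ (Fin d)) (hwnext : wnext = W' n - η • V' n) :
    P wnext - Pstar + (η * ((n : ℝ) + 1) / 16) * ‖vcur‖ ^ 2
      ≤ (1 - η * μ * ((n : ℝ) + 1) / 2)
        * (P wcur - Pstar + (η * ((n : ℝ) + 1) / 16) * ‖vprev‖ ^ 2) :=
  shuffled_sarah_one_epoch_contraction_general hd hn f P hP L μ δ η hL hμ hdiff hLip hsc wstar Pstar
    hPstar hη0 hη π π' vprev W V hV0 hWrec hVrec wcur hwcur vcur hvcur W' V' hW'0 hV'0 hW'rec hV'rec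
    wnext hwnext
end

section
/- (Corollary to Theorem 2, iteration-complexity form.) Assume each f_i is convex, P is μ-strongly convex with minimizer w* and optimal value P*, the δ-similarity condition holds, and 0 < η ≤ min(1/(8nL), 1/(8n²δ)). Consider the RR-SARAH trajectory: w_{s+1} is the output of a SARAH epoch with step size η, permutation π_s, start point w_s and initial direction ∇P(w_s), for each s ≥ 0. Fix ε > 0 and assume P(w_0) − P* > 0. Then for every integer S ≥ (2/(η·μ·(n+1)))·max(0, log((P(w_0) − P*)/ε)), it holds that P(w_S) − P* ≤ ε. -/
/-!
Within an epoch, SARAH is an inexact gradient method for `P`: the error `vⁱ - ∇P(wⁱ)` vanishes at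
`i = 0` and, since every `∇f_j - ∇P` is `δ/2`-Lipschitz, changes by at most `(δ/2)·η‖v^{i-1}‖`
per inner step. The descent lemma and the Polyak–Łojasiewicz inequality give
`P(wⁱ⁺¹) - P* ≤ (1 - ημ)(P(wⁱ) - P*) + (η/2)‖vⁱ - ∇P(wⁱ)‖² - (η/2)(1 - Lη)‖vⁱ‖²`,
and under `η ≤ min(1/(8nL), 1/(8n²δ))` the accumulated squared errors are dominated by the
`‖vⁱ‖²` terms. So every epoch multiplies `P - P*` by at most `(1 - ημ)^(n+1) ≤ exp(-ημ(n+1))`.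
-/

open Set Finset
open scoped RealInnerProductSpace

variable {F : Type*} [NormedAddCommGroup F] [InnerProductSpace ℝ F] [CompleteSpace F]

section SmoothStronglyConvex

variable {p : F → ℝ} {g : F → F} {m L : ℝ}

theorem HasGradientAt.hasDerivAt_add_smul {x v p' : F} {t : ℝ}
    (h : HasGradientAt p p' (x + t • v)) :
    HasDerivAt (fun s : ℝ => p (x + s • v)) ⟪p', v⟫ t := by
  have hline : HasDerivAt (fun s : ℝ => x + s • v) v t := by
    simpa using ((hasDerivAt_id t).smul_const v).const_add x
  exact (hasGradientAt_iff_hasFDerivAt.mp h).comp_hasDerivAt t hline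

theorem StrongConvexOn.inner_gradient_add_le (hp : StrongConvexOn univ m p) {x p' : F}
    (hx : HasGradientAt p p' x) (y : F) :
    ⟪p', y - x⟫ + m / 2 * ‖y - x‖ ^ 2 ≤ p y - p x := by
  set v := y - x
  -- `p - (m / 2)‖·‖²` is convex; compare its slope on `[x, y]` with its derivative at `x`
  have hφ : ConvexOn ℝ univ fun t : ℝ => p (x + t • v) - m / 2 * ‖x + t • v‖ ^ 2 := by
    have h := (strongConvexOn_iff_convex.mp hp).comp_affineMap (AffineMap.lineMap x y)
    rw [preimage_univ] at h
    refine h.congr fun t _ => ?_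
    simp [AffineMap.lineMap_apply, v, add_comm]
  have hline : HasDerivAt (fun t : ℝ => x + t • v) v 0 := by
    simpa using ((hasDerivAt_id (0 : ℝ)).smul_const v).const_add x
  have hφ' : HasDerivAt (fun t : ℝ => p (x + t • v) - m / 2 * ‖x + t • v‖ ^ 2)
      (⟪p', v⟫ - m / 2 * (2 * ⟪x, v⟫)) 0 := by
    refine (HasGradientAt.hasDerivAt_add_smul ?_).sub ?_
    · simpa using hx
    · simpa using hline.norm_sq.const_mul (m / 2)
  have key := hφ.le_slope_of_hasDerivAt (mem_univ 0) (mem_univ 1) one_pos hφ'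
  have hy : x + v = y := add_sub_cancel x y
  simp only [slope_def_field, one_smul, zero_smul, add_zero, hy, sub_zero, div_one] at key
  have hnorm : ‖y‖ ^ 2 = ‖x‖ ^ 2 + 2 * ⟪x, v⟫ + ‖v‖ ^ 2 := by
    rw [← hy, norm_add_sq_real]
  rw [hnorm] at key
  linear_combination key

theorem StrongConvexOn.polyak_lojasiewicz (hp : StrongConvexOn univ m p) (hm : 0 ≤ m)
    {x p' : F} (hx : HasGradientAt p p' x) (y : F) :
    2 * m * (p x - p y) ≤ ‖p'‖ ^ 2 := by
  have h := hp.inner_gradient_add_le hx y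
  have hcs : -(‖p'‖ * ‖y - x‖) ≤ ⟪p', y - x⟫ := neg_le_of_abs_le (abs_real_inner_le_norm _ _)
  nlinarith [sq_nonneg (‖p'‖ - m * ‖y - x‖)]

theorem StrongConvexOn.le_of_lipschitz_gradient_s5 (hp : StrongConvexOn univ m p)
    (hg : ∀ z, HasGradientAt p (g z) z) (hLip : ∀ a b, ‖g a - g b‖ ≤ L * ‖a - b‖)
    {x y : F} (hxy : x ≠ y) : m ≤ L := by
  have hx := hp.inner_gradient_add_le (hg x) y
  have hy := hp.inner_gradient_add_le (hg y) x
  rw [norm_sub_rev x y, ← neg_sub y x, inner_neg_right] at hy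
  have hcs : ⟪g y - g x, y - x⟫ ≤ ‖g y - g x‖ * ‖y - x‖ := real_inner_le_norm _ _
  rw [inner_sub_left] at hcs
  have hpos : 0 < ‖y - x‖ ^ 2 := by
    have := norm_pos_iff.mpr (sub_ne_zero.mpr hxy.symm)
    positivity
  have hL := mul_le_mul_of_nonneg_right (hLip y x) (norm_nonneg (y - x))
  exact le_of_mul_le_mul_right (by linarith) hpos

theorem le_add_inner_gradient_add_of_lipschitz (hg : ∀ z, HasGradientAt p (g z) z)
    (hLip : ∀ a b, ‖g a - g b‖ ≤ L * ‖a - b‖) (x y : F) :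
    p y ≤ p x + ⟪g x, y - x⟫ + L / 2 * ‖y - x‖ ^ 2 := by
  set v := y - x
  set ψ : ℝ → ℝ := fun t => p (x + t • v) - t * ⟪g x, v⟫ - L / 2 * t ^ 2 * ‖v‖ ^ 2
  have hψ' : ∀ t, HasDerivAt ψ (⟪g (x + t • v) - g x, v⟫ - L * t * ‖v‖ ^ 2) t := by
    intro t
    have h2 : HasDerivAt (fun s : ℝ => s * ⟪g x, v⟫) ⟪g x, v⟫ t := by
      simpa using (hasDerivAt_id t).mul_const ⟪g x, v⟫
    have h3 : HasDerivAt (fun s : ℝ => L / 2 * s ^ 2 * ‖v‖ ^ 2) (L * t * ‖v‖ ^ 2) t :=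
      (((hasDerivAt_pow 2 t).const_mul (L / 2)).mul_const (‖v‖ ^ 2)).congr_deriv
        (by rw [Nat.cast_ofNat, pow_one]; ring)
    exact (((hg (x + t • v)).hasDerivAt_add_smul.sub h2).sub h3).congr_deriv
      (by rw [inner_sub_left])
  -- for `t > 0`, Cauchy–Schwarz and the Lipschitz bound give `ψ' t ≤ L t ‖v‖² - L t ‖v‖²`
  have hanti : AntitoneOn ψ (Icc 0 1) := by
    refine antitoneOn_of_deriv_nonpos (convex_Icc 0 1)
      (fun t _ => (hψ' t).continuousAt.continuousWithinAt)
      (fun t _ => (hψ' t).differentiableAt.differentiableWithinAt) fun t ht => ?_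
    rw [interior_Icc] at ht
    rw [(hψ' t).deriv]
    have hcs := real_inner_le_norm (g (x + t • v) - g x) v
    have hL := hLip (x + t • v) x
    rw [add_sub_cancel_left, norm_smul, Real.norm_of_nonneg ht.1.le] at hL
    nlinarith [mul_le_mul_of_nonneg_right hL (norm_nonneg v)]
  have key := hanti (left_mem_Icc.mpr zero_le_one) (right_mem_Icc.mpr zero_le_one) zero_le_one
  have hy : x + v = y := add_sub_cancel x y
  simp only [ψ, one_smul, zero_smul, add_zero, hy] at key
  linarith

theorem StrongConvexOn.sub_le_of_inexact_gradient_step (hp : StrongConvexOn univ m p)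
    (hm : 0 ≤ m) (hg : ∀ z, HasGradientAt p (g z) z) (hLip : ∀ a b, ‖g a - g b‖ ≤ L * ‖a - b‖)
    {η : ℝ} (hη : 0 ≤ η) (u v y : F) :
    p (u - η • v) - p y ≤ (1 - η * m) * (p u - p y) + η / 2 * ‖v - g u‖ ^ 2
      - η / 2 * (1 - L * η) * ‖v‖ ^ 2 := by
  have hdesc := le_add_inner_gradient_add_of_lipschitz hg hLip u (u - η • v)
  rw [sub_sub_cancel_left, inner_neg_right, real_inner_smul_right, norm_neg, norm_smul,
    Real.norm_of_nonneg hη] at hdesc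
  have hPL := mul_le_mul_of_nonneg_left (hp.polyak_lojasiewicz hm (hg u) y) hη
  have hsq : ‖v - g u‖ ^ 2 = ‖v‖ ^ 2 - 2 * ⟪g u, v⟫ + ‖g u‖ ^ 2 := by
    rw [norm_sub_sq_real, real_inner_comm]
  rw [hsq]
  nlinarith

end SmoothStronglyConvex

section Average

variable {n : ℕ} {f : Fin n → F → ℝ} {P : F → ℝ}

theorem hasGradientAt_of_eq_average (hP : ∀ w, P w = 1 / (n : ℝ) * ∑ i, f i w)
    (hdiff : ∀ i, Differentiable ℝ (f i)) (x : F) :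
    HasGradientAt P ((1 / (n : ℝ)) • ∑ i, gradient (f i) x) x := by
  rw [funext hP, hasGradientAt_iff_hasFDerivAt]
  have h := (HasFDerivAt.fun_sum (u := univ) fun i _ =>
    hasGradientAt_iff_hasFDerivAt.mp (hdiff i x).hasGradientAt).const_mul (1 / (n : ℝ))
  exact h.congr_fderiv (by simp [map_sum])

theorem norm_gradient_sub_le_of_eq_average (hn : 1 ≤ n)
    (hP : ∀ w, P w = 1 / (n : ℝ) * ∑ i, f i w) (hdiff : ∀ i, Differentiable ℝ (f i)) {L : ℝ}
    (hLip : ∀ i a b, ‖gradient (f i) a - gradient (f i) b‖ ≤ L * ‖a - b‖) (a b : F) :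
    ‖gradient P a - gradient P b‖ ≤ L * ‖a - b‖ := by
  have hn' : (0 : ℝ) < n := by exact_mod_cast hn
  rw [(hasGradientAt_of_eq_average hP hdiff a).gradient,
    (hasGradientAt_of_eq_average hP hdiff b).gradient, ← smul_sub, ← sum_sub_distrib, norm_smul,
    Real.norm_of_nonneg (by positivity)]
  calc 1 / (n : ℝ) * ‖∑ i, (gradient (f i) a - gradient (f i) b)‖
      ≤ 1 / n * ∑ _i : Fin n, L * ‖a - b‖ := by
        gcongr
        exact (norm_sum_le _ _).trans (sum_le_sum fun i _ => hLip i a b)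
    _ = L * ‖a - b‖ := by
        rw [sum_const, card_univ, Fintype.card_fin, nsmul_eq_mul]
        field_simp

end Average

theorem le_pow_mul_add_sum_of_le_mul_add {a b : ℕ → ℝ} {q : ℝ} (hq : 0 ≤ q) {N : ℕ}
    (h : ∀ k < N, a (k + 1) ≤ q * a k + b k) :
    a N ≤ q ^ N * a 0 + ∑ k ∈ range N, q ^ (N - 1 - k) * b k := by
  induction N with
  | zero => simp
  | succ N ih =>
    have hsum : ∑ k ∈ range (N + 1), q ^ (N + 1 - 1 - k) * b k
        = q * ∑ k ∈ range N, q ^ (N - 1 - k) * b k + b N := by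
      rw [sum_range_succ, mul_sum, Nat.add_sub_cancel, Nat.sub_self, pow_zero, one_mul]
      congr 1
      refine sum_congr rfl fun k hk => ?_
      rw [← mul_assoc, ← pow_succ']
      have := mem_range.mp hk
      congr 2
      omega
    calc a (N + 1) ≤ q * a N + b N := h N (Nat.lt_succ_self N)
      _ ≤ q * (q ^ N * a 0 + ∑ k ∈ range N, q ^ (N - 1 - k) * b k) + b N := by
        gcongr
        exact ih fun k hk => h k (Nat.lt_succ_of_lt hk)
      _ = _ := by rw [hsum, pow_succ']; ring

theorem sum_pow_mul_sub_le {q : ℝ} (hq0 : 0 ≤ q) (hq1 : q ≤ 1) {N : ℕ} {a b : ℕ → ℝ}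
    (ha : ∀ k ∈ range (N + 1), 0 ≤ a k) (hb : ∀ k ∈ range (N + 1), 0 ≤ b k) :
    ∑ k ∈ range (N + 1), q ^ (N - k) * (a k - b k)
      ≤ ∑ k ∈ range (N + 1), a k - q ^ N * ∑ k ∈ range (N + 1), b k := by
  rw [mul_sum, ← sum_sub_distrib]
  refine sum_le_sum fun k hk => ?_
  have hpow : q ^ (N - k) ≤ 1 := pow_le_one₀ hq0 hq1
  have hpow' : q ^ N ≤ q ^ (N - k) := pow_le_pow_of_le_one hq0 hq1 (Nat.sub_le N k)
  linarith [mul_le_mul_of_nonneg_right hpow (ha k hk),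
    mul_le_mul_of_nonneg_right hpow' (hb k hk)]

theorem one_sub_pow_mul_le_of_log_div_le {r a ε : ℝ} {k : ℕ} (hr : r ≤ 1) (ha : 0 < a)
    (hε : 0 < ε) (h : Real.log (a / ε) ≤ r * k) : (1 - r) ^ k * a ≤ ε := by
  have hpow : (1 - r) ^ k ≤ ε / a :=
    calc (1 - r) ^ k ≤ Real.exp (-r) ^ k :=
          pow_le_pow_left₀ (by linarith) (by linarith [Real.add_one_le_exp (-r)]) k
      _ = Real.exp (-(r * k)) := by rw [← Real.exp_nat_mul]; ring_nf
      _ ≤ Real.exp (-Real.log (a / ε)) := Real.exp_le_exp.mpr (neg_le_neg h)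
      _ = ε / a := by rw [Real.exp_neg, Real.exp_log (div_pos ha hε), inv_div]
  calc (1 - r) ^ k * a ≤ ε / a * a := by gcongr
    _ = ε := div_mul_cancel₀ ε ha.ne'

theorem sarah_error_sq_le {E : Type*} [NormedAddCommGroup E] [NormedSpace ℝ E] {g : E → E}
    {δ η : ℝ} {N : ℕ} {X V : ℕ → E} (hη : 0 ≤ η) (hX : ∀ k < N, X (k + 1) = X k - η • V k)
    (hV0 : V 0 = g (X 0))
    (herr : ∀ k < N,
      ‖(V (k + 1) - g (X (k + 1))) - (V k - g (X k))‖ ≤ δ / 2 * ‖X (k + 1) - X k‖)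
    {i : ℕ} (hi : i ≤ N) :
    ‖V i - g (X i)‖ ^ 2 ≤ (δ / 2 * η) ^ 2 * (N * ∑ j ∈ range (N + 1), ‖V j‖ ^ 2) := by
  have hnorm : ‖V i - g (X i)‖ ≤ δ / 2 * η * ∑ j ∈ range i, ‖V j‖ := by
    have h := dist_le_range_sum_of_dist_le (f := fun k => V k - g (X k))
      (d := fun k => δ / 2 * η * ‖V k‖) i fun {k} hk => by
        have hk' : k < N := hk.trans_le hi
        have hstep : ‖X (k + 1) - X k‖ = η * ‖V k‖ := by
          rw [hX k hk', sub_sub_cancel_left, norm_neg, norm_smul, Real.norm_of_nonneg hη]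
        rw [dist_comm, dist_eq_norm, mul_assoc, ← hstep]
        exact herr k hk'
    rwa [hV0, sub_self, dist_zero_left, ← mul_sum] at h
  have hcs : (∑ j ∈ range i, ‖V j‖) ^ 2 ≤ N * ∑ j ∈ range (N + 1), ‖V j‖ ^ 2 :=
    calc (∑ j ∈ range i, ‖V j‖) ^ 2 ≤ i * ∑ j ∈ range i, ‖V j‖ ^ 2 := by
          simpa using sq_sum_le_card_mul_sum_sq (s := range i) (f := fun j => ‖V j‖)
      _ ≤ N * ∑ j ∈ range (N + 1), ‖V j‖ ^ 2 := by
          gcongr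
          omega
  calc ‖V i - g (X i)‖ ^ 2 ≤ (δ / 2 * η * ∑ j ∈ range i, ‖V j‖) ^ 2 :=
        pow_le_pow_left₀ (norm_nonneg _) hnorm 2
    _ = (δ / 2 * η) ^ 2 * (∑ j ∈ range i, ‖V j‖) ^ 2 := by ring
    _ ≤ _ := by gcongr

-- The step-size condition in the form that lets the descent terms absorb the SARAH errors.
theorem sarah_error_coeff_le_descent_coeff {N : ℕ} {m L δ η : ℝ} (hN : 1 ≤ N) (hη : 0 < η)
    (hδ : 0 ≤ δ) (hmL : m ≤ L) (hηL : N * (η * L) ≤ 1 / 8)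
    (hηδ : N ^ 2 * (η * δ) ≤ 1 / 8) :
    (N + 1) * (η / 2 * ((δ / 2 * η) ^ 2 * N)) ≤ (1 - η * m) ^ N * (η / 2 * (1 - L * η)) := by
  have hN' : (1 : ℝ) ≤ N := by exact_mod_cast hN
  have hηL1 : η * L ≤ 1 / 8 := by nlinarith
  have hqN : 7 / 8 ≤ (1 - η * m) ^ N := by
    have := one_add_mul_le_pow (a := -(η * m)) (by nlinarith) N
    rw [← sub_eq_add_neg] at this
    nlinarith [mul_le_mul_of_nonneg_left hmL hη.le]
  have hc : 7 / 16 * η ≤ η / 2 * (1 - L * η) := by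
    nlinarith [mul_le_mul_of_nonneg_left hηL1 hη.le]
  have hNN : (N : ℝ) * (N + 1) ≤ 2 * N ^ 4 :=
    calc (N : ℝ) * (N + 1) ≤ N * (2 * N ^ 3) := by
          gcongr
          nlinarith [pow_le_pow_right₀ hN' (show 1 ≤ 3 by norm_num)]
      _ = 2 * N ^ 4 := by ring
  have hsq : (N ^ 2 * (η * δ)) ^ 2 ≤ (1 / 8) ^ 2 := pow_le_pow_left₀ (by positivity) hηδ 2
  have hsmall : (η * δ) ^ 2 * (N * (N + 1)) ≤ 1 / 32 := by
    nlinarith [mul_le_mul_of_nonneg_left hNN (sq_nonneg (η * δ))]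
  nlinarith [mul_le_mul hqN hc (by positivity) (by linarith),
    mul_le_mul_of_nonneg_left hsmall hη.le]

theorem sarah_epoch_contraction {p : F → ℝ} {g : F → F} {m L δ η : ℝ} {N : ℕ} {X V : ℕ → F}
    (hp : StrongConvexOn univ m p) (hm : 0 ≤ m) (hmL : m ≤ L)
    (hg : ∀ z, HasGradientAt p (g z) z) (hLip : ∀ a b, ‖g a - g b‖ ≤ L * ‖a - b‖)
    (hδ : 0 ≤ δ) (hN : 1 ≤ N) (hη : 0 < η) (hηL : N * (η * L) ≤ 1 / 8)
    (hηδ : N ^ 2 * (η * δ) ≤ 1 / 8)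
    (hX : ∀ k ≤ N, X (k + 1) = X k - η • V k) (hV0 : V 0 = g (X 0))
    (herr : ∀ k < N,
      ‖(V (k + 1) - g (X (k + 1))) - (V k - g (X k))‖ ≤ δ / 2 * ‖X (k + 1) - X k‖)
    (y : F) :
    p (X (N + 1)) - p y ≤ (1 - η * m) ^ (N + 1) * (p (X 0) - p y) := by
  set q := 1 - η * m with hq
  set c := η / 2 * (1 - L * η) with hc
  set T := ∑ j ∈ range (N + 1), ‖V j‖ ^ 2
  have hN' : (1 : ℝ) ≤ N := by exact_mod_cast hN
  have hηm : η * m ≤ 1 / 8 := by nlinarith [mul_le_mul_of_nonneg_left hmL hη.le]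
  have hq0 : 0 ≤ q := by linarith
  have hq1 : q ≤ 1 := by nlinarith
  have hc0 : 0 ≤ c := by nlinarith
  have hunroll := le_pow_mul_add_sum_of_le_mul_add (a := fun k => p (X k) - p y)
    (b := fun k => η / 2 * ‖V k - g (X k)‖ ^ 2 - c * ‖V k‖ ^ 2) hq0 (N := N + 1)
    fun k hk => by
      rw [hX k (by omega)]
      have := hp.sub_le_of_inexact_gradient_step hm hg hLip hη.le (X k) (V k) y
      rw [← hq, ← hc] at this
      linarith
  simp only [Nat.add_sub_cancel] at hunroll
  have herrors : ∑ k ∈ range (N + 1),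
      q ^ (N - k) * (η / 2 * ‖V k - g (X k)‖ ^ 2 - c * ‖V k‖ ^ 2) ≤ 0 :=
    calc _ ≤ ∑ k ∈ range (N + 1), η / 2 * ‖V k - g (X k)‖ ^ 2
            - q ^ N * ∑ k ∈ range (N + 1), c * ‖V k‖ ^ 2 :=
          sum_pow_mul_sub_le hq0 hq1 (fun k _ => by positivity)
            fun k _ => mul_nonneg hc0 (sq_nonneg _)
      _ ≤ ∑ k ∈ range (N + 1), η / 2 * ((δ / 2 * η) ^ 2 * (N * T))
            - q ^ N * ∑ k ∈ range (N + 1), c * ‖V k‖ ^ 2 := by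
          gcongr with k hk
          exact sarah_error_sq_le hη.le (fun k hk => hX k hk.le) hV0 herr
            (mem_range_succ_iff.mp hk)
      _ = ((N + 1) * (η / 2 * ((δ / 2 * η) ^ 2 * N)) - q ^ N * c) * T := by
          rw [sum_const, card_range, nsmul_eq_mul, ← mul_sum]
          push_cast
          ring
      _ ≤ 0 := mul_nonpos_of_nonpos_of_nonneg
          (sub_nonpos.mpr (sarah_error_coeff_le_descent_coeff hN hη hδ hmL hηL hηδ))
          (sum_nonneg fun j _ => sq_nonneg _)
  simpa using hunroll.trans (by linarith)

theorem rr_sarah_epoch_contraction {ι : Type*} {f : ι → F → ℝ} {P : F → ℝ} {μ L δ η : ℝ} {n : ℕ}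
    (hsc : StrongConvexOn univ μ P) (hμ : 0 ≤ μ) (hμL : μ ≤ L)
    (hP : ∀ z, HasGradientAt P (gradient P z) z)
    (hLip : ∀ a b, ‖gradient P a - gradient P b‖ ≤ L * ‖a - b‖)
    (hsim : ∀ i w₁ w₂,
      ‖(gradient (f i) w₁ - gradient P w₁) - (gradient (f i) w₂ - gradient P w₂)‖
        ≤ δ / 2 * ‖w₁ - w₂‖)
    (hδ : 0 ≤ δ) (hn : 1 ≤ n) (hη : 0 < η) (hηL : n * (η * L) ≤ 1 / 8)
    (hηδ : n ^ 2 * (η * δ) ≤ 1 / 8) (σ : Fin n → ι) {W V : ℕ → F}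
    (hV0 : V 0 = gradient P (W 0)) (hW : ∀ i : Fin n, W (i + 1) = W i - η • V i)
    (hV : ∀ i : Fin n,
      V (i + 1) = V i + gradient (f (σ i)) (W (i + 1)) - gradient (f (σ i)) (W i))
    (y : F) :
    P (W n - η • V n) - P y ≤ (1 - η * μ) ^ (n + 1) * (P (W 0) - P y) := by
  set X : ℕ → F := fun k => if k ≤ n then W k else W n - η • V n
  have hXW : ∀ k ≤ n, X k = W k := fun k hk => if_pos hk
  have hX : ∀ k ≤ n, X (k + 1) = X k - η • V k := by
    intro k hk
    rcases hk.lt_or_eq with hk | rfl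
    · rw [hXW k hk.le, hXW (k + 1) hk, hW ⟨k, hk⟩]
    · simp [X]
  have herr : ∀ k < n, ‖(V (k + 1) - gradient P (X (k + 1))) - (V k - gradient P (X k))‖
      ≤ δ / 2 * ‖X (k + 1) - X k‖ := by
    intro k hk
    rw [hXW k hk.le, hXW (k + 1) hk, hV ⟨k, hk⟩]
    convert hsim (σ ⟨k, hk⟩) (W (k + 1)) (W k) using 2
    abel
  simpa [X] using sarah_epoch_contraction hsc hμ hμL hP hLip hδ hn hη hηL hηδ hX
    (by rw [hXW 0 (Nat.zero_le n), hV0]) herr y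

theorem rr_sarah_iteration_complexity_general
    {d n : ℕ} (hn : 1 ≤ n)
    (f : Fin n → EuclideanSpace ℝ (Fin d) → ℝ)
    (P : EuclideanSpace ℝ (Fin d) → ℝ)
    (hP : ∀ w, P w = (1 / (n : ℝ)) * ∑ i, f i w)
    (L μ δ η : ℝ) (hL : 0 < L) (hμ : 0 < μ) (hδ : 0 < δ)
    (hdiff : ∀ i, Differentiable ℝ (f i))
    (hLip : ∀ i w₁ w₂, ‖gradient (f i) w₁ - gradient (f i) w₂‖ ≤ L * ‖w₁ - w₂‖)
    (hsc : StrongConvexOn Set.univ μ P)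
    (wstar : EuclideanSpace ℝ (Fin d))
    (Pstar : ℝ) (hPstar : Pstar = P wstar)
    (hsim : ∀ i w₁ w₂,
      ‖(gradient (f i) w₁ - gradient P w₁) - (gradient (f i) w₂ - gradient P w₂)‖
        ≤ (δ / 2) * ‖w₁ - w₂‖)
    (hη0 : 0 < η)
    (hη : η ≤ min (1 / (8 * n * L)) (1 / (8 * n ^ 2 * δ)))
    -- the RR-SARAH trajectory
    (π : ℕ → Equiv.Perm (Fin n))
    (w : ℕ → EuclideanSpace ℝ (Fin d))
    (W V : ℕ → ℕ → EuclideanSpace ℝ (Fin d))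
    (hW0 : ∀ s, W s 0 = w s) (hV0 : ∀ s, V s 0 = gradient P (w s))
    (hWrec : ∀ s, ∀ i : Fin n, W s ((i : ℕ) + 1) = W s i - η • V s i)
    (hVrec : ∀ s, ∀ i : Fin n, V s ((i : ℕ) + 1)
      = V s i + gradient (f (π s i)) (W s ((i : ℕ) + 1)) - gradient (f (π s i)) (W s i))
    (hwnext : ∀ s, w (s + 1) = W s n - η • V s n)
    (ε : ℝ) (hε : 0 < ε) (h0 : 0 < P (w 0) - Pstar) :
    ∀ S : ℕ,
      (2 / (η * μ * ((n : ℝ) + 1))) * max 0 (Real.log ((P (w 0) - Pstar) / ε)) ≤ (S : ℝ) →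
      P (w S) - Pstar ≤ ε := by
  intro S hS
  have hgrad (x) : HasGradientAt P (gradient P x) x :=
    (hasGradientAt_of_eq_average hP hdiff x).differentiableAt.hasGradientAt
  have hLipP := norm_gradient_sub_le_of_eq_average hn hP hdiff hLip
  have hμL : μ ≤ L := hsc.le_of_lipschitz_gradient_s5 hgrad hLipP (x := w 0) (y := wstar)
    fun h => by rw [h, hPstar, sub_self] at h0; exact h0.false
  obtain ⟨hηL, hηδ⟩ := le_min_iff.mp hη
  rw [le_div_iff₀ (by positivity)] at hηL hηδ
  have hn' : (1 : ℝ) ≤ n := by exact_mod_cast hn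
  have hημ : η * μ ≤ 1 / 8 := by
    nlinarith [mul_le_mul_of_nonneg_left hμL hη0.le,
      mul_nonneg (mul_nonneg hη0.le hL.le) (sub_nonneg.mpr hn')]
  have hepoch (s : ℕ) : P (w (s + 1)) - Pstar ≤ (1 - η * μ) ^ (n + 1) * (P (w s) - Pstar) := by
    rw [hPstar, hwnext, ← hW0 s]
    exact rr_sarah_epoch_contraction hsc hμ.le hμL hgrad hLipP hsim hδ.le hn hη0 (by linarith)
      (by linarith) (π s) (by rw [hV0, hW0]) (hWrec s) (hVrec s) wstar
  have hiter := le_geom (u := fun s => P (w s) - Pstar) (pow_nonneg (by linarith) _) S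
    fun s _ => hepoch s
  rw [← pow_mul] at hiter
  refine hiter.trans (one_sub_pow_mul_le_of_log_div_le (by linarith) h0 hε ?_)
  rw [div_mul_eq_mul_div, div_le_iff₀ (by positivity)] at hS
  push_cast
  linarith [le_max_left 0 (Real.log ((P (w 0) - Pstar) / ε)),
    le_max_right 0 (Real.log ((P (w 0) - Pstar) / ε))]

/-- Corollary to Theorem 2, iteration-complexity form, for RR-SARAH. -/
theorem rr_sarah_iteration_complexity
    {d n : ℕ} (hd : 1 ≤ d) (hn : 1 ≤ n)
    (f : Fin n → EuclideanSpace ℝ (Fin d) → ℝ)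
    (P : EuclideanSpace ℝ (Fin d) → ℝ)
    (hP : ∀ w, P w = (1 / (n : ℝ)) * ∑ i, f i w)
    (L μ δ η : ℝ) (hL : 0 < L) (hμ : 0 < μ) (hδ : 0 < δ)
    (hdiff : ∀ i, Differentiable ℝ (f i))
    (hconv : ∀ i, ConvexOn ℝ Set.univ (f i))
    (hLip : ∀ i w₁ w₂, ‖gradient (f i) w₁ - gradient (f i) w₂‖ ≤ L * ‖w₁ - w₂‖)
    (hsc : StrongConvexOn Set.univ μ P)
    (wstar : EuclideanSpace ℝ (Fin d)) (hmin : IsMinOn P Set.univ wstar)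
    (Pstar : ℝ) (hPstar : Pstar = P wstar)
    (hsim : ∀ i w₁ w₂,
      ‖(gradient (f i) w₁ - gradient P w₁) - (gradient (f i) w₂ - gradient P w₂)‖
        ≤ (δ / 2) * ‖w₁ - w₂‖)
    (hη0 : 0 < η)
    (hη : η ≤ min (1 / (8 * n * L)) (1 / (8 * n ^ 2 * δ)))
    -- the RR-SARAH trajectory
    (π : ℕ → Equiv.Perm (Fin n))
    (w : ℕ → EuclideanSpace ℝ (Fin d))
    (W V : ℕ → ℕ → EuclideanSpace ℝ (Fin d))
    (hW0 : ∀ s, W s 0 = w s) (hV0 : ∀ s, V s 0 = gradient P (w s))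
    (hWrec : ∀ s, ∀ i : Fin n, W s ((i : ℕ) + 1) = W s i - η • V s i)
    (hVrec : ∀ s, ∀ i : Fin n, V s ((i : ℕ) + 1)
      = V s i + gradient (f (π s i)) (W s ((i : ℕ) + 1)) - gradient (f (π s i)) (W s i))
    (hwnext : ∀ s, w (s + 1) = W s n - η • V s n)
    (ε : ℝ) (hε : 0 < ε) (h0 : 0 < P (w 0) - Pstar) :
    ∀ S : ℕ,
      (2 / (η * μ * ((n : ℝ) + 1))) * max 0 (Real.log ((P (w 0) - Pstar) / ε)) ≤ (S : ℝ) →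
      P (w S) - Pstar ≤ ε :=
  rr_sarah_iteration_complexity_general hn f P hP L μ δ η hL hμ hδ hdiff hLip hsc wstar Pstar hPstar
    hsim hη0 hη π w W V hW0 hV0 hWrec hVrec hwnext ε hε h0
end

section
/- (Lemma 2: variance bound for the recursive SARAH directions.) Assume the δ-similarity condition. Fix a permutation π of {1,…,n}, a point w_s ∈ ℝ^d, a vector v_s ∈ ℝ^d, and arbitrary points w¹, …, wⁿ ∈ ℝ^d; set w⁰ = w_s, v⁰ = v_s, and define recursively vⁱ = v^{i−1} + ∇f_{π(i)}(wⁱ) − ∇f_{π(i)}(w^{i−1}) for i = 1,…,n. Then ‖∇P(w_s) − (1/(n+1))·Σ_{i=0}^{n} vⁱ‖² ≤ 2·‖∇P(w_s) − v_s‖² + (4L²/(n+1) + 4δ²n)·Σ_{i=1}^{n} ‖wⁱ − w_s‖². -/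
open scoped BigOperators

set_option maxHeartbeats 1000000

/-- Lemma 2: variance bound for the recursive SARAH directions. -/
theorem sarah_directions_variance_bound
    {d n : ℕ} (hd : 1 ≤ d) (hn : 1 ≤ n)
    (f : Fin n → EuclideanSpace ℝ (Fin d) → ℝ)
    (P : EuclideanSpace ℝ (Fin d) → ℝ)
    (hP : ∀ w, P w = (1 / (n : ℝ)) * ∑ i, f i w)
    (L δ : ℝ) (hL : 0 < L) (hδ : 0 < δ)
    (hdiff : ∀ i, Differentiable ℝ (f i))
    (hLip : ∀ i w₁ w₂, ‖gradient (f i) w₁ - gradient (f i) w₂‖ ≤ L * ‖w₁ - w₂‖)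
    (hsim : ∀ i w₁ w₂,
      ‖(gradient (f i) w₁ - gradient P w₁) - (gradient (f i) w₂ - gradient P w₂)‖
        ≤ (δ / 2) * ‖w₁ - w₂‖)
    (π : Equiv.Perm (Fin n))
    (ws vs : EuclideanSpace ℝ (Fin d))
    -- arbitrary inner points `W 1, …, W n` with `W 0 = ws`, and the SARAH direction recursion
    (W V : ℕ → EuclideanSpace ℝ (Fin d))
    (hW0 : W 0 = ws) (hV0 : V 0 = vs)
    (hVrec : ∀ i : Fin n, V ((i : ℕ) + 1)
      = V i + gradient (f (π i)) (W ((i : ℕ) + 1)) - gradient (f (π i)) (W i)) :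
    ‖gradient P ws - (1 / ((n : ℝ) + 1)) • ∑ i ∈ Finset.range (n + 1), V i‖ ^ 2
      ≤ 2 * ‖gradient P ws - vs‖ ^ 2
        + (4 * L ^ 2 / ((n : ℝ) + 1) + 4 * δ ^ 2 * n)
          * ∑ i ∈ Finset.range n, ‖W (i + 1) - ws‖ ^ 2 := by
  have hn0 : (0:ℝ) < (n:ℝ) := by exact_mod_cast Nat.lt_of_lt_of_le Nat.zero_lt_one hn
  have hN0 : (0:ℝ) < (n:ℝ) + 1 := by linarith
  set S : ℝ := ∑ i ∈ Finset.range n, ‖W (i + 1) - ws‖ ^ 2 with hS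
  have hSnn : 0 ≤ S := Finset.sum_nonneg fun _ _ => by positivity
  -- gradient of P is the average of gradients
  have hgrad : ∀ x, gradient P x = (1 / (n : ℝ)) • ∑ i, gradient (f i) x := by
    intro x
    have hPfun : P = fun w => (1 / (n : ℝ)) * ∑ i, f i w := funext hP
    have hsumd : DifferentiableAt ℝ (fun w => ∑ i, f i w) x :=
      DifferentiableAt.fun_sum fun i _ => (hdiff i).differentiableAt
    have hfd : fderiv ℝ P x = (1 / (n : ℝ)) • ∑ i, fderiv ℝ (f i) x := by
      rw [hPfun, fderiv_const_mul hsumd, fderiv_fun_sum fun i _ => (hdiff i).differentiableAt]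
    show (InnerProductSpace.toDual ℝ _).symm (fderiv ℝ P x) = _
    rw [hfd, map_smul, map_sum]
    rfl
  -- gradient of P is L-Lipschitz
  have hQlip : ∀ x y, ‖gradient P x - gradient P y‖ ≤ L * ‖x - y‖ := by
    intro x y
    rw [hgrad x, hgrad y, ← smul_sub, ← Finset.sum_sub_distrib]
    have h1 : ‖∑ i, (gradient (f i) x - gradient (f i) y)‖
        ≤ ∑ i : Fin n, (L * ‖x - y‖) := by
      refine (norm_sum_le _ _).trans (Finset.sum_le_sum fun i _ => hLip i x y)
    rw [norm_smul]
    have h2 : ∑ _i : Fin n, (L * ‖x - y‖) = (n:ℝ) * (L * ‖x - y‖) := by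
      rw [Finset.sum_const, Finset.card_univ, Fintype.card_fin, nsmul_eq_mul]
    have h3 : ‖(1 / (n:ℝ))‖ = 1 / (n:ℝ) := by
      rw [Real.norm_eq_abs, abs_of_pos (by positivity)]
    rw [h3]
    calc 1 / (n:ℝ) * ‖∑ i, (gradient (f i) x - gradient (f i) y)‖
        ≤ 1 / (n:ℝ) * ((n:ℝ) * (L * ‖x - y‖)) := by
          apply mul_le_mul_of_nonneg_left _ (by positivity)
          rw [← h2]; exact h1
      _ = L * ‖x - y‖ := by field_simp
  -- the similarity increments
  set E : ℕ → EuclideanSpace ℝ (Fin d) := fun j =>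
    if h : j < n then
      (gradient (f (π ⟨j, h⟩)) (W (j+1)) - gradient P (W (j+1)))
        - (gradient (f (π ⟨j, h⟩)) (W j) - gradient P (W j))
    else 0 with hE
  -- telescoping identity
  have hid : ∀ i, i ≤ n →
      V i = vs + (gradient P (W i) - gradient P ws) + ∑ j ∈ Finset.range i, E j := by
    intro i
    induction i with
    | zero => intro _; simp [hV0, hW0]
    | succ i ih =>
      intro h
      have hi : i < n := h
      have hrec := hVrec ⟨i, hi⟩
      simp only [Fin.val_mk] at hrec
      have hEi : E i = (gradient (f (π ⟨i, hi⟩)) (W (i+1)) - gradient P (W (i+1)))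
          - (gradient (f (π ⟨i, hi⟩)) (W i) - gradient P (W i)) := by
        rw [hE]; exact dif_pos hi
      rw [Finset.sum_range_succ, hrec, ih (le_of_lt hi), hEi]
      abel
  -- squared norm bound on E
  have hEsq : ∀ j ∈ Finset.range n,
      ‖E j‖ ^ 2 ≤ δ ^ 2 / 2 * (‖W (j+1) - ws‖ ^ 2 + ‖W j - ws‖ ^ 2) := by
    intro j hj
    have hjn : j < n := Finset.mem_range.1 hj
    have h1 : ‖E j‖ ≤ δ / 2 * ‖W (j+1) - W j‖ := by
      have hEj : E j = (gradient (f (π ⟨j, hjn⟩)) (W (j+1)) - gradient P (W (j+1)))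
          - (gradient (f (π ⟨j, hjn⟩)) (W j) - gradient P (W j)) := by
        rw [hE]; exact dif_pos hjn
      rw [hEj]; exact hsim _ _ _
    have h2 : ‖W (j+1) - W j‖ ≤ ‖W (j+1) - ws‖ + ‖W j - ws‖ := by
      have : W (j+1) - W j = (W (j+1) - ws) - (W j - ws) := by abel
      rw [this]; exact norm_sub_le _ _
    have h3 : ‖E j‖ ≤ δ / 2 * (‖W (j+1) - ws‖ + ‖W j - ws‖) :=
      h1.trans (mul_le_mul_of_nonneg_left h2 (by positivity))
    have h4 : ‖E j‖ ^ 2 ≤ (δ / 2 * (‖W (j+1) - ws‖ + ‖W j - ws‖)) ^ 2 :=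
      pow_le_pow_left₀ (norm_nonneg _) h3 2
    nlinarith [h4, sq_nonneg (‖W (j+1) - ws‖ - ‖W j - ws‖), sq_nonneg δ]
  -- sum of squared E is at most δ² S
  have hT : ∑ j ∈ Finset.range n, ‖W j - ws‖ ^ 2 ≤ S := by
    obtain ⟨m, hm⟩ : ∃ m, n = m + 1 := ⟨n - 1, by omega⟩
    rw [hS, hm, Finset.sum_range_succ' (fun j => ‖W j - ws‖ ^ 2) m]
    rw [hW0]
    simp only [sub_self, norm_zero, ne_eq, OfNat.ofNat_ne_zero, not_false_eq_true, zero_pow,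
      add_zero]
    exact Finset.sum_le_sum_of_subset_of_nonneg
      (Finset.range_subset_range.2 (Nat.le_succ m)) (fun _ _ _ => by positivity)
  have hEsum : ∑ j ∈ Finset.range n, ‖E j‖ ^ 2 ≤ δ ^ 2 * S := by
    calc ∑ j ∈ Finset.range n, ‖E j‖ ^ 2
        ≤ ∑ j ∈ Finset.range n, δ ^ 2 / 2 * (‖W (j+1) - ws‖ ^ 2 + ‖W j - ws‖ ^ 2) :=
          Finset.sum_le_sum hEsq
      _ = δ ^ 2 / 2 * (S + ∑ j ∈ Finset.range n, ‖W j - ws‖ ^ 2) := by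
          rw [hS, ← Finset.sum_add_distrib, Finset.mul_sum]
      _ ≤ δ ^ 2 / 2 * (S + S) := by
          apply mul_le_mul_of_nonneg_left _ (by positivity)
          linarith [hT]
      _ = δ ^ 2 * S := by ring
  -- bound on ‖V i - vs‖²
  have hVsq : ∀ i, i ≤ n →
      ‖V i - vs‖ ^ 2 ≤ 2 * L ^ 2 * ‖W i - ws‖ ^ 2 + 2 * (n:ℝ) * δ ^ 2 * S := by
    intro i hi
    have heq : V i - vs = (gradient P (W i) - gradient P ws) + ∑ j ∈ Finset.range i, E j := by
      rw [hid i hi]; abel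
    have ha : ‖gradient P (W i) - gradient P ws‖ ≤ L * ‖W i - ws‖ := hQlip _ _
    have hbsub : ∑ j ∈ Finset.range i, ‖E j‖ ^ 2 ≤ ∑ j ∈ Finset.range n, ‖E j‖ ^ 2 :=
      Finset.sum_le_sum_of_subset_of_nonneg (Finset.range_subset_range.2 hi)
        (fun _ _ _ => by positivity)
    have hb1 : ‖∑ j ∈ Finset.range i, E j‖ ≤ ∑ j ∈ Finset.range i, ‖E j‖ := norm_sum_le _ _
    have hb2 : (∑ j ∈ Finset.range i, ‖E j‖) ^ 2
        ≤ (i:ℝ) * ∑ j ∈ Finset.range i, ‖E j‖ ^ 2 := by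
      have := sq_sum_le_card_mul_sum_sq (s := Finset.range i) (f := fun j => ‖E j‖)
      simpa [Finset.card_range] using this
    have hb : ‖∑ j ∈ Finset.range i, E j‖ ^ 2 ≤ (n:ℝ) * (δ ^ 2 * S) := by
      have h4 : ‖∑ j ∈ Finset.range i, E j‖ ^ 2 ≤ (∑ j ∈ Finset.range i, ‖E j‖) ^ 2 := by
        exact pow_le_pow_left₀ (norm_nonneg _) hb1 2
      have hin : (i:ℝ) ≤ (n:ℝ) := by exact_mod_cast hi
      have h5 : (i:ℝ) * ∑ j ∈ Finset.range i, ‖E j‖ ^ 2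
          ≤ (n:ℝ) * (δ ^ 2 * S) := by
        have hnn : 0 ≤ ∑ j ∈ Finset.range i, ‖E j‖ ^ 2 :=
          Finset.sum_nonneg fun _ _ => by positivity
        calc (i:ℝ) * ∑ j ∈ Finset.range i, ‖E j‖ ^ 2
            ≤ (n:ℝ) * ∑ j ∈ Finset.range i, ‖E j‖ ^ 2 := by
              exact mul_le_mul_of_nonneg_right hin hnn
          _ ≤ (n:ℝ) * (δ ^ 2 * S) := by
              apply mul_le_mul_of_nonneg_left _ (by positivity)
              exact le_trans hbsub hEsum
      linarith [h4, hb2]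
    rw [heq]
    have ha2 : ‖gradient P (W i) - gradient P ws‖ ^ 2 ≤ (L * ‖W i - ws‖) ^ 2 :=
      pow_le_pow_left₀ (norm_nonneg _) ha 2
    have h6 : ‖(gradient P (W i) - gradient P ws) + ∑ j ∈ Finset.range i, E j‖ ^ 2
        ≤ (‖gradient P (W i) - gradient P ws‖ + ‖∑ j ∈ Finset.range i, E j‖) ^ 2 :=
      pow_le_pow_left₀ (norm_nonneg _) (norm_add_le _ _) 2
    nlinarith [h6, ha2, hb,
      sq_nonneg (‖gradient P (W i) - gradient P ws‖ - ‖∑ j ∈ Finset.range i, E j‖)]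
  -- split the average
  have hsplit : gradient P ws - (1 / ((n:ℝ) + 1)) • ∑ i ∈ Finset.range (n + 1), V i
      = (gradient P ws - vs)
        - (1 / ((n:ℝ) + 1)) • ∑ i ∈ Finset.range (n + 1), (V i - vs) := by
    rw [Finset.sum_sub_distrib, smul_sub, Finset.sum_const, Finset.card_range]
    have : (1 / ((n:ℝ) + 1)) • ((n + 1) • vs) = vs := by
      rw [← Nat.cast_smul_eq_nsmul ℝ, smul_smul]
      push_cast
      rw [show (1 / ((n:ℝ) + 1)) * ((n:ℝ) + 1) = 1 by field_simp, one_smul]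
    rw [this]
    abel
  -- bound the norm of the averaged deviation
  have havg : ‖(1 / ((n:ℝ) + 1)) • ∑ i ∈ Finset.range (n + 1), (V i - vs)‖ ^ 2
      ≤ 2 * L ^ 2 * S / ((n:ℝ) + 1) + 2 * (n:ℝ) * δ ^ 2 * S := by
    have hWsum : ∑ i ∈ Finset.range (n + 1), ‖W i - ws‖ ^ 2 = S := by
      rw [Finset.sum_range_succ' (fun j => ‖W j - ws‖ ^ 2) n, hW0]
      simp [hS]
    have h1 : ∑ i ∈ Finset.range (n + 1), ‖V i - vs‖ ^ 2
        ≤ 2 * L ^ 2 * S + ((n:ℝ) + 1) * (2 * (n:ℝ) * δ ^ 2 * S) := by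
      calc ∑ i ∈ Finset.range (n + 1), ‖V i - vs‖ ^ 2
          ≤ ∑ i ∈ Finset.range (n + 1),
              (2 * L ^ 2 * ‖W i - ws‖ ^ 2 + 2 * (n:ℝ) * δ ^ 2 * S) := by
            refine Finset.sum_le_sum fun i hi => hVsq i ?_
            exact Nat.lt_succ_iff.1 (Finset.mem_range.1 hi)
        _ = 2 * L ^ 2 * S + ((n:ℝ) + 1) * (2 * (n:ℝ) * δ ^ 2 * S) := by
            rw [Finset.sum_add_distrib, ← Finset.mul_sum, hWsum, Finset.sum_const,
              Finset.card_range, nsmul_eq_mul]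
            push_cast; ring
    have h2 : ‖∑ i ∈ Finset.range (n + 1), (V i - vs)‖ ^ 2
        ≤ ((n:ℝ) + 1) * ∑ i ∈ Finset.range (n + 1), ‖V i - vs‖ ^ 2 := by
      have hb1 := norm_sum_le (Finset.range (n + 1)) (fun i => V i - vs)
      have hb2 := sq_sum_le_card_mul_sum_sq (s := Finset.range (n + 1))
        (f := fun i => ‖V i - vs‖)
      have hb3 : ‖∑ i ∈ Finset.range (n + 1), (V i - vs)‖ ^ 2
          ≤ (∑ i ∈ Finset.range (n + 1), ‖V i - vs‖) ^ 2 :=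
        pow_le_pow_left₀ (norm_nonneg _) hb1 2
      calc ‖∑ i ∈ Finset.range (n + 1), (V i - vs)‖ ^ 2
          ≤ (∑ i ∈ Finset.range (n + 1), ‖V i - vs‖) ^ 2 := hb3
        _ ≤ ((n:ℝ) + 1) * ∑ i ∈ Finset.range (n + 1), ‖V i - vs‖ ^ 2 := by
            have := hb2
            rw [Finset.card_range] at this
            push_cast at this ⊢
            exact this
    rw [norm_smul, mul_pow]
    have h3 : ‖(1 / ((n:ℝ) + 1))‖ ^ 2 = (1 / ((n:ℝ) + 1)) ^ 2 := by
      rw [Real.norm_eq_abs, abs_of_pos (by positivity)]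
    rw [h3]
    calc (1 / ((n:ℝ) + 1)) ^ 2 * ‖∑ i ∈ Finset.range (n + 1), (V i - vs)‖ ^ 2
        ≤ (1 / ((n:ℝ) + 1)) ^ 2 * (((n:ℝ) + 1)
            * (2 * L ^ 2 * S + ((n:ℝ) + 1) * (2 * (n:ℝ) * δ ^ 2 * S))) := by
          apply mul_le_mul_of_nonneg_left _ (by positivity)
          calc ‖∑ i ∈ Finset.range (n + 1), (V i - vs)‖ ^ 2
              ≤ ((n:ℝ) + 1) * ∑ i ∈ Finset.range (n + 1), ‖V i - vs‖ ^ 2 := h2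
            _ ≤ ((n:ℝ) + 1) * (2 * L ^ 2 * S + ((n:ℝ) + 1) * (2 * (n:ℝ) * δ ^ 2 * S)) :=
              mul_le_mul_of_nonneg_left h1 (by positivity)
      _ = 2 * L ^ 2 * S / ((n:ℝ) + 1) + 2 * (n:ℝ) * δ ^ 2 * S := by
          field_simp
  -- conclude
  rw [hsplit]
  have hfin := norm_sub_le (gradient P ws - vs)
    ((1 / ((n:ℝ) + 1)) • ∑ i ∈ Finset.range (n + 1), (V i - vs))
  have hkey : ‖(gradient P ws - vs)
      - (1 / ((n:ℝ) + 1)) • ∑ i ∈ Finset.range (n + 1), (V i - vs)‖ ^ 2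
      ≤ 2 * ‖gradient P ws - vs‖ ^ 2
        + 2 * ‖(1 / ((n:ℝ) + 1)) • ∑ i ∈ Finset.range (n + 1), (V i - vs)‖ ^ 2 := by
    have h7 : ‖(gradient P ws - vs)
        - (1 / ((n:ℝ) + 1)) • ∑ i ∈ Finset.range (n + 1), (V i - vs)‖ ^ 2
        ≤ (‖gradient P ws - vs‖
          + ‖(1 / ((n:ℝ) + 1)) • ∑ i ∈ Finset.range (n + 1), (V i - vs)‖) ^ 2 :=
      pow_le_pow_left₀ (norm_nonneg _) (norm_sub_le _ _) 2
    nlinarith [h7, sq_nonneg (‖gradient P ws - vs‖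
        - ‖(1 / ((n:ℝ) + 1)) • ∑ i ∈ Finset.range (n + 1), (V i - vs)‖)]
  calc ‖(gradient P ws - vs)
      - (1 / ((n:ℝ) + 1)) • ∑ i ∈ Finset.range (n + 1), (V i - vs)‖ ^ 2
      ≤ 2 * ‖gradient P ws - vs‖ ^ 2
        + 2 * ‖(1 / ((n:ℝ) + 1)) • ∑ i ∈ Finset.range (n + 1), (V i - vs)‖ ^ 2 := hkey
    _ ≤ 2 * ‖gradient P ws - vs‖ ^ 2
        + 2 * (2 * L ^ 2 * S / ((n:ℝ) + 1) + 2 * (n:ℝ) * δ ^ 2 * S) := by linarith [havg]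
    _ = 2 * ‖gradient P ws - vs‖ ^ 2
        + (4 * L ^ 2 / ((n:ℝ) + 1) + 4 * δ ^ 2 * (n:ℝ)) * S := by
        field_simp
        ring
end

section
/- (Combined variance bound in the proof of Theorem 1.) Assume the δ-similarity condition. Fix permutations π and π' of {1,…,n}. Let w¹_prev, …, wⁿ_prev ∈ ℝ^d be arbitrary points, let w_s ∈ ℝ^d, and set v_s = (1/n)·Σ_{i=1}^{n} ∇f_{π(i)}(wⁱ_prev). Let w¹, …, wⁿ ∈ ℝ^d be arbitrary points, set w⁰ = w_s, v⁰ = v_s, and define recursively vⁱ = v^{i−1} + ∇f_{π'(i)}(wⁱ) − ∇f_{π'(i)}(w^{i−1}) for i = 1,…,n. Then ‖∇P(w_s) − (1/(n+1))·Σ_{i=0}^{n} vⁱ‖² ≤ (4L²/(n+1) + 4δ²n)·Σ_{i=1}^{n} ‖wⁱ − w_s‖² + (2L²/n)·Σ_{i=1}^{n} ‖wⁱ_prev − w_s‖². -/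
/-!
Write `G` for the average of the maps `g i` (the component gradients). Along the inner loop the
estimator error `G (W k) - V k` changes at step `j` by the increment of `g (π' j) - G` between
`W j` and `W (j + 1)`, so δ-similarity bounds its total drift by `δ / 2` times the path length,
hence by `δ * ∑ ‖W (i + 1) - ws‖`. At the start the error is `G ws - vs`, which the Lipschitz
bound controls by `(L / n) * ∑ ‖Wprev i - ws‖`. Together with `‖G ws - G (W k)‖ ≤ L ‖W k - ws‖`
and averaging over `k = 0, …, n`, this bounds the norm by a sum of three terms; then
`(a + b + c) ^ 2 ≤ 2 a ^ 2 + 4 b ^ 2 + 4 c ^ 2` and Cauchy–Schwarz give the squared bound.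
-/

open Finset

lemma gradient_const_mul_sum {F ι : Type*} [NormedAddCommGroup F] [InnerProductSpace ℝ F]
    [CompleteSpace F] (s : Finset ι) (c : ℝ) {f : ι → F → ℝ} {w : F}
    (hf : ∀ i ∈ s, DifferentiableAt ℝ (f i) w) :
    gradient (fun w => c * ∑ i ∈ s, f i w) w = c • ∑ i ∈ s, gradient (f i) w := by
  have hsum : HasFDerivAt (fun w => ∑ i ∈ s, f i w)
      (InnerProductSpace.toDual ℝ F (∑ i ∈ s, gradient (f i) w)) w := by
    rw [map_sum]
    exact HasFDerivAt.fun_sum fun i hi => (hf i hi).hasGradientAt.hasFDerivAt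
  have hmul := hsum.const_mul c
  rw [← map_smul] at hmul
  exact (hasGradientAt_iff_hasFDerivAt.mpr hmul).gradient

lemma sq_le_of_le_add_add {x a b c : ℝ} (hx : 0 ≤ x) (h : x ≤ a + b + c) :
    x ^ 2 ≤ 2 * a ^ 2 + 4 * b ^ 2 + 4 * c ^ 2 := by
  nlinarith [sq_nonneg (a - b - c), sq_nonneg (b - c)]

section

variable {E : Type*} [NormedAddCommGroup E]

lemma sum_range_norm_succ_sub_le (W : ℕ → E) (n : ℕ) :
    ∑ j ∈ range n, ‖W (j + 1) - W j‖ ≤ 2 * ∑ j ∈ range n, ‖W (j + 1) - W 0‖ := by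
  have hshift : ∑ j ∈ range n, ‖W j - W 0‖ ≤ ∑ j ∈ range n, ‖W (j + 1) - W 0‖ := by
    calc ∑ j ∈ range n, ‖W j - W 0‖ ≤ ∑ j ∈ range (n + 1), ‖W j - W 0‖ :=
          sum_le_sum_of_subset_of_nonneg (range_subset_range.2 n.le_succ)
            fun _ _ _ => norm_nonneg _
      _ = ∑ j ∈ range n, ‖W (j + 1) - W 0‖ := by simp [sum_range_succ']
  calc ∑ j ∈ range n, ‖W (j + 1) - W j‖
      ≤ ∑ j ∈ range n, (‖W (j + 1) - W 0‖ + ‖W j - W 0‖) :=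
        sum_le_sum fun j _ => norm_sub_le_norm_sub_add_norm_sub _ _ _ |>.trans_eq
          (by rw [norm_sub_rev (W 0)])
    _ ≤ 2 * ∑ j ∈ range n, ‖W (j + 1) - W 0‖ := by rw [sum_add_distrib]; linarith

variable {n : ℕ} {L δ : ℝ}

lemma norm_sarah_error_sub_le {g : Fin n → E → E} {G : E → E} {c : ℝ} {W V : ℕ → E}
    (hsim : ∀ i w₁ w₂, ‖(g i w₁ - G w₁) - (g i w₂ - G w₂)‖ ≤ c * ‖w₁ - w₂‖)
    (hV : ∀ i : Fin n, V (i + 1) = V i + g i (W (i + 1)) - g i (W i)) {k : ℕ} (hk : k ≤ n) :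
    ‖(G (W k) - V k) - (G (W 0) - V 0)‖ ≤ c * ∑ j ∈ range k, ‖W (j + 1) - W j‖ := by
  rw [← sum_range_sub (fun j => G (W j) - V j), mul_sum]
  refine norm_sum_le_of_le _ fun j hj => ?_
  have hj : j < n := (mem_range.mp hj).trans_le hk
  calc ‖(G (W (j + 1)) - V (j + 1)) - (G (W j) - V j)‖
      = ‖(g ⟨j, hj⟩ (W (j + 1)) - G (W (j + 1))) - (g ⟨j, hj⟩ (W j) - G (W j))‖ := by
        rw [← norm_neg, hV ⟨j, hj⟩]; congr 1; abel
    _ ≤ c * ‖W (j + 1) - W j‖ := hsim _ _ _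

lemma norm_sub_sarah_iterate_le (hδ : 0 ≤ δ) {g : Fin n → E → E} {G : E → E}
    (hGLip : ∀ w₁ w₂, ‖G w₁ - G w₂‖ ≤ L * ‖w₁ - w₂‖)
    (hsim : ∀ i w₁ w₂, ‖(g i w₁ - G w₁) - (g i w₂ - G w₂)‖ ≤ (δ / 2) * ‖w₁ - w₂‖)
    {W V : ℕ → E} (hV : ∀ i : Fin n, V (i + 1) = V i + g i (W (i + 1)) - g i (W i))
    {k : ℕ} (hk : k ≤ n) :
    ‖G (W 0) - V k‖
      ≤ ‖G (W 0) - V 0‖ + L * ‖W k - W 0‖ + δ * ∑ i ∈ range n, ‖W (i + 1) - W 0‖ := by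
  have hpath : ∑ j ∈ range k, ‖W (j + 1) - W j‖ ≤ 2 * ∑ i ∈ range n, ‖W (i + 1) - W 0‖ :=
    (sum_le_sum_of_subset_of_nonneg (range_subset_range.2 hk)
      fun _ _ _ => norm_nonneg _).trans (sum_range_norm_succ_sub_le W n)
  have hdrift : ‖(G (W k) - V k) - (G (W 0) - V 0)‖
      ≤ δ * ∑ i ∈ range n, ‖W (i + 1) - W 0‖ :=
    calc ‖(G (W k) - V k) - (G (W 0) - V 0)‖
        ≤ δ / 2 * ∑ j ∈ range k, ‖W (j + 1) - W j‖ := norm_sarah_error_sub_le hsim hV hk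
      _ ≤ δ / 2 * (2 * ∑ i ∈ range n, ‖W (i + 1) - W 0‖) := by gcongr
      _ = δ * ∑ i ∈ range n, ‖W (i + 1) - W 0‖ := by ring
  calc ‖G (W 0) - V k‖
      = ‖(G (W 0) - V 0) + (G (W 0) - G (W k)) + ((G (W k) - V k) - (G (W 0) - V 0))‖ := by
        congr 1; abel
    _ ≤ ‖G (W 0) - V 0‖ + ‖G (W 0) - G (W k)‖ + ‖(G (W k) - V k) - (G (W 0) - V 0)‖ :=
        norm_add₃_le
    _ ≤ ‖G (W 0) - V 0‖ + L * ‖W k - W 0‖ + δ * ∑ i ∈ range n, ‖W (i + 1) - W 0‖ := by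
        gcongr; simpa only [norm_sub_rev (W k)] using hGLip (W 0) (W k)

variable [NormedSpace ℝ E]

lemma norm_sub_average_le {ι : Type*} {s : Finset ι} (hs : s.Nonempty) (x : E) (y : ι → E) :
    ‖x - (1 / (#s : ℝ)) • ∑ i ∈ s, y i‖ ≤ 1 / (#s : ℝ) * ∑ i ∈ s, ‖x - y i‖ := by
  have hcard : (1 / (#s : ℝ)) * #s = 1 := one_div_mul_cancel (by simp [hs.ne_empty])
  have hx : x = (1 / (#s : ℝ)) • ∑ _i ∈ s, x := by
    rw [sum_const, ← Nat.cast_smul_eq_nsmul ℝ, smul_smul, hcard, one_smul]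
  calc ‖x - (1 / (#s : ℝ)) • ∑ i ∈ s, y i‖
      = ‖(1 / (#s : ℝ)) • ∑ i ∈ s, (x - y i)‖ := by rw [sum_sub_distrib, smul_sub, ← hx]
    _ = 1 / (#s : ℝ) * ‖∑ i ∈ s, (x - y i)‖ := by
        rw [norm_smul, Real.norm_of_nonneg (by positivity)]
    _ ≤ 1 / (#s : ℝ) * ∑ i ∈ s, ‖x - y i‖ := by gcongr; exact norm_sum_le _ _

lemma norm_average_sub_average_le {g : Fin n → E → E}
    (hLip : ∀ i w₁ w₂, ‖g i w₁ - g i w₂‖ ≤ L * ‖w₁ - w₂‖) (a b : Fin n → E) :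
    ‖(1 / (n : ℝ)) • ∑ i, g i (a i) - (1 / (n : ℝ)) • ∑ i, g i (b i)‖
      ≤ L / n * ∑ i, ‖a i - b i‖ := by
  calc ‖(1 / (n : ℝ)) • ∑ i, g i (a i) - (1 / (n : ℝ)) • ∑ i, g i (b i)‖
      = 1 / n * ‖∑ i, (g i (a i) - g i (b i))‖ := by
        rw [← smul_sub, ← sum_sub_distrib, norm_smul, Real.norm_of_nonneg (by positivity)]
    _ ≤ 1 / n * ∑ i, L * ‖a i - b i‖ := by
        gcongr; exact norm_sum_le_of_le _ fun i _ => hLip i _ _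
    _ = L / n * ∑ i, ‖a i - b i‖ := by rw [← mul_sum]; ring

lemma norm_average_apply_sub_le {g : Fin n → E → E} (hL : 0 ≤ L)
    (hLip : ∀ i w₁ w₂, ‖g i w₁ - g i w₂‖ ≤ L * ‖w₁ - w₂‖) (w₁ w₂ : E) :
    ‖(1 / (n : ℝ)) • ∑ i, g i w₁ - (1 / (n : ℝ)) • ∑ i, g i w₂‖ ≤ L * ‖w₁ - w₂‖ := by
  have hcard : L / n * n ≤ L := by
    rcases n.eq_zero_or_pos with rfl | hn
    · simpa using hL
    · rw [div_mul_cancel₀ _ (by positivity)]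
  calc ‖(1 / (n : ℝ)) • ∑ i, g i w₁ - (1 / (n : ℝ)) • ∑ i, g i w₂‖
      ≤ L / n * ∑ _i : Fin n, ‖w₁ - w₂‖ :=
        norm_average_sub_average_le hLip (fun _ => w₁) (fun _ => w₂)
    _ = L / n * n * ‖w₁ - w₂‖ := by
        simp only [sum_const, card_univ, Fintype.card_fin, nsmul_eq_mul]; ring
    _ ≤ L * ‖w₁ - w₂‖ := by gcongr

lemma norm_sub_average_sarah_le (hδ : 0 ≤ δ) {g : Fin n → E → E} {G : E → E}
    (hGLip : ∀ w₁ w₂, ‖G w₁ - G w₂‖ ≤ L * ‖w₁ - w₂‖)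
    (hsim : ∀ i w₁ w₂, ‖(g i w₁ - G w₁) - (g i w₂ - G w₂)‖ ≤ (δ / 2) * ‖w₁ - w₂‖)
    {W V : ℕ → E} (hV : ∀ i : Fin n, V (i + 1) = V i + g i (W (i + 1)) - g i (W i)) :
    ‖G (W 0) - (1 / ((n : ℝ) + 1)) • ∑ i ∈ range (n + 1), V i‖
      ≤ ‖G (W 0) - V 0‖ + L / (n + 1) * ∑ i ∈ range n, ‖W (i + 1) - W 0‖
        + δ * ∑ i ∈ range n, ‖W (i + 1) - W 0‖ := by
  set S := ∑ i ∈ range n, ‖W (i + 1) - W 0‖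
  have hmean := norm_sub_average_le (s := range (n + 1)) nonempty_range_add_one (G (W 0)) V
  simp only [card_range, Nat.cast_succ] at hmean
  calc ‖G (W 0) - (1 / ((n : ℝ) + 1)) • ∑ i ∈ range (n + 1), V i‖
      ≤ 1 / ((n : ℝ) + 1) * ∑ i ∈ range (n + 1), ‖G (W 0) - V i‖ := hmean
    _ ≤ 1 / ((n : ℝ) + 1) * ∑ i ∈ range (n + 1), (‖G (W 0) - V 0‖ + L * ‖W i - W 0‖ + δ * S) := by
        gcongr with i hi
        exact norm_sub_sarah_iterate_le hδ hGLip hsim hV (Nat.lt_succ_iff.mp (mem_range.mp hi))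
    _ = ‖G (W 0) - V 0‖ + L / (n + 1) * S + δ * S := by
        simp only [sum_add_distrib, sum_const, card_range, nsmul_eq_mul, ← mul_sum,
          sum_range_succ' (fun i => ‖W i - W 0‖), sub_self, norm_zero, add_zero]
        field_simp; push_cast; ring

theorem norm_sub_average_sarah_sq_le (hL : 0 ≤ L) (hδ : 0 ≤ δ)
    {g : Fin n → E → E} {G : E → E} (hG : ∀ w, G w = (1 / (n : ℝ)) • ∑ i, g i w)
    (hLip : ∀ i w₁ w₂, ‖g i w₁ - g i w₂‖ ≤ L * ‖w₁ - w₂‖)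
    (hsim : ∀ i w₁ w₂, ‖(g i w₁ - G w₁) - (g i w₂ - G w₂)‖ ≤ (δ / 2) * ‖w₁ - w₂‖)
    (π π' : Equiv.Perm (Fin n)) (Wprev : Fin n → E) (ws vs : E)
    (hvs : vs = (1 / (n : ℝ)) • ∑ i : Fin n, g (π i) (Wprev i))
    (W V : ℕ → E) (hW0 : W 0 = ws) (hV0 : V 0 = vs)
    (hVrec : ∀ i : Fin n, V ((i : ℕ) + 1)
      = V i + g (π' i) (W ((i : ℕ) + 1)) - g (π' i) (W i)) :
    ‖G ws - (1 / ((n : ℝ) + 1)) • ∑ i ∈ range (n + 1), V i‖ ^ 2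
      ≤ (4 * L ^ 2 / ((n : ℝ) + 1) + 4 * δ ^ 2 * n) * ∑ i ∈ range n, ‖W (i + 1) - ws‖ ^ 2
        + (2 * L ^ 2 / (n : ℝ)) * ∑ i : Fin n, ‖Wprev i - ws‖ ^ 2 := by
  set S := ∑ i ∈ range n, ‖W (i + 1) - ws‖
  set T := ∑ i, ‖Wprev i - ws‖
  have hA : ‖G ws - vs‖ ≤ L / n * T := by
    rw [hG, hvs, ← Equiv.sum_comp π (fun i => g i ws), norm_sub_rev]
    exact norm_average_sub_average_le (fun i => hLip (π i)) Wprev (fun _ => ws)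
  have hGLip : ∀ w₁ w₂, ‖G w₁ - G w₂‖ ≤ L * ‖w₁ - w₂‖ := fun w₁ w₂ => by
    rw [hG, hG]; exact norm_average_apply_sub_le hL hLip _ _
  have hmean := norm_sub_average_sarah_le hδ hGLip (fun i => hsim (π' i)) hVrec
  rw [hW0, hV0] at hmean
  set Q := ∑ i ∈ range n, ‖W (i + 1) - ws‖ ^ 2
  set R := ∑ i, ‖Wprev i - ws‖ ^ 2
  have hS : S ^ 2 ≤ n * Q := by
    simpa using sq_sum_le_card_mul_sum_sq (s := range n) (f := fun i => ‖W (i + 1) - ws‖)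
  have hT : T ^ 2 ≤ n * R := by
    simpa using sq_sum_le_card_mul_sum_sq (s := univ) (f := fun i => ‖Wprev i - ws‖)
  have hA2 : ‖G ws - vs‖ ^ 2 ≤ L ^ 2 / n * R :=
    calc ‖G ws - vs‖ ^ 2 ≤ (L / n * T) ^ 2 := pow_le_pow_left₀ (norm_nonneg _) hA 2
      _ = L ^ 2 / n ^ 2 * T ^ 2 := by ring
      _ ≤ L ^ 2 / n ^ 2 * (n * R) := by gcongr
      _ = L ^ 2 / n * R := by
        rcases eq_or_ne (n : ℝ) 0 with h | h
        · simp [h]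
        · field_simp
  have hB2 : (L / (n + 1) * S) ^ 2 ≤ L ^ 2 / (n + 1) * Q :=
    calc (L / (n + 1) * S) ^ 2 = L ^ 2 / ((n : ℝ) + 1) ^ 2 * S ^ 2 := by rw [mul_pow, div_pow]
      _ ≤ L ^ 2 / ((n : ℝ) + 1) ^ 2 * ((n + 1) * Q) := by
        gcongr; nlinarith [sum_nonneg fun i (_ : i ∈ range n) => sq_nonneg ‖W (i + 1) - ws‖]
      _ = L ^ 2 / (n + 1) * Q := by field_simp
  have hC2 : (δ * S) ^ 2 ≤ δ ^ 2 * n * Q := by rw [mul_pow, mul_assoc]; gcongr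
  calc _ ≤ 2 * ‖G ws - vs‖ ^ 2 + 4 * (L / (n + 1) * S) ^ 2 + 4 * (δ * S) ^ 2 :=
        sq_le_of_le_add_add (norm_nonneg _) hmean
    _ ≤ 2 * (L ^ 2 / n * R) + 4 * (L ^ 2 / (n + 1) * Q) + 4 * (δ ^ 2 * n * Q) := by gcongr
    _ = _ := by ring

end

theorem combined_variance_bound_general
    {d n : ℕ}
    (f : Fin n → EuclideanSpace ℝ (Fin d) → ℝ)
    (P : EuclideanSpace ℝ (Fin d) → ℝ)
    (hP : ∀ w, P w = (1 / (n : ℝ)) * ∑ i, f i w)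
    (L δ : ℝ) (hL : 0 < L) (hδ : 0 < δ)
    (hdiff : ∀ i, Differentiable ℝ (f i))
    (hLip : ∀ i w₁ w₂, ‖gradient (f i) w₁ - gradient (f i) w₂‖ ≤ L * ‖w₁ - w₂‖)
    (hsim : ∀ i w₁ w₂,
      ‖(gradient (f i) w₁ - gradient P w₁) - (gradient (f i) w₂ - gradient P w₂)‖
        ≤ (δ / 2) * ‖w₁ - w₂‖)
    (π π' : Equiv.Perm (Fin n))
    -- points of the previous epoch and the aggregated direction
    (Wprev : Fin n → EuclideanSpace ℝ (Fin d))
    (ws : EuclideanSpace ℝ (Fin d))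
    (vs : EuclideanSpace ℝ (Fin d))
    (hvs : vs = (1 / (n : ℝ)) • ∑ i : Fin n, gradient (f (π i)) (Wprev i))
    -- arbitrary inner points `W 1, …, W n` with `W 0 = ws`, and the SARAH direction recursion
    (W V : ℕ → EuclideanSpace ℝ (Fin d))
    (hW0 : W 0 = ws) (hV0 : V 0 = vs)
    (hVrec : ∀ i : Fin n, V ((i : ℕ) + 1)
      = V i + gradient (f (π' i)) (W ((i : ℕ) + 1)) - gradient (f (π' i)) (W i)) :
    ‖gradient P ws - (1 / ((n : ℝ) + 1)) • ∑ i ∈ Finset.range (n + 1), V i‖ ^ 2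
      ≤ (4 * L ^ 2 / ((n : ℝ) + 1) + 4 * δ ^ 2 * n)
          * ∑ i ∈ Finset.range n, ‖W (i + 1) - ws‖ ^ 2
        + (2 * L ^ 2 / (n : ℝ)) * ∑ i : Fin n, ‖Wprev i - ws‖ ^ 2 := by
  have hgradP : ∀ w, gradient P w = (1 / (n : ℝ)) • ∑ i, gradient (f i) w := fun w => by
    rw [funext hP]
    exact gradient_const_mul_sum _ _ fun i _ => (hdiff i).differentiableAt
  exact norm_sub_average_sarah_sq_le hL.le hδ.le hgradP hLip hsim π π' Wprev ws vs hvs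
    W V hW0 hV0 hVrec

/-- Combined variance bound in the proof of Theorem 1. -/
theorem combined_variance_bound
    {d n : ℕ} (hd : 1 ≤ d) (hn : 1 ≤ n)
    (f : Fin n → EuclideanSpace ℝ (Fin d) → ℝ)
    (P : EuclideanSpace ℝ (Fin d) → ℝ)
    (hP : ∀ w, P w = (1 / (n : ℝ)) * ∑ i, f i w)
    (L δ : ℝ) (hL : 0 < L) (hδ : 0 < δ)
    (hdiff : ∀ i, Differentiable ℝ (f i))
    (hLip : ∀ i w₁ w₂, ‖gradient (f i) w₁ - gradient (f i) w₂‖ ≤ L * ‖w₁ - w₂‖)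
    (hsim : ∀ i w₁ w₂,
      ‖(gradient (f i) w₁ - gradient P w₁) - (gradient (f i) w₂ - gradient P w₂)‖
        ≤ (δ / 2) * ‖w₁ - w₂‖)
    (π π' : Equiv.Perm (Fin n))
    -- points of the previous epoch and the aggregated direction
    (Wprev : Fin n → EuclideanSpace ℝ (Fin d))
    (ws : EuclideanSpace ℝ (Fin d))
    (vs : EuclideanSpace ℝ (Fin d))
    (hvs : vs = (1 / (n : ℝ)) • ∑ i : Fin n, gradient (f (π i)) (Wprev i))
    -- arbitrary inner points `W 1, …, W n` with `W 0 = ws`, and the SARAH direction recursion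
    (W V : ℕ → EuclideanSpace ℝ (Fin d))
    (hW0 : W 0 = ws) (hV0 : V 0 = vs)
    (hVrec : ∀ i : Fin n, V ((i : ℕ) + 1)
      = V i + gradient (f (π' i)) (W ((i : ℕ) + 1)) - gradient (f (π' i)) (W i)) :
    ‖gradient P ws - (1 / ((n : ℝ) + 1)) • ∑ i ∈ Finset.range (n + 1), V i‖ ^ 2
      ≤ (4 * L ^ 2 / ((n : ℝ) + 1) + 4 * δ ^ 2 * n)
          * ∑ i ∈ Finset.range n, ‖W (i + 1) - ws‖ ^ 2
        + (2 * L ^ 2 / (n : ℝ)) * ∑ i : Fin n, ‖Wprev i - ws‖ ^ 2 :=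
  combined_variance_bound_general f P hP L δ hL hδ hdiff hLip hsim π π' Wprev ws vs hvs W V hW0 hV0
    hVrec
end
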